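/- arXiv:1307.5666 — 5 statements merged into one kernel-verified Lean document; each statement's English description precedes it below -/
import Mathlib

section
/- For any two disjoint bounded convex polygons P and Q in the plane, there are at most 4 distinct lines each of which is tangent to (i.e., supports without crossing the interior of) both P and Q. -/
open Set

/-- A non-vertical line in the plane represented by (slope, intercept). -/
def lineSet (l : ℝ × ℝ) : Set (ℝ × ℝ) := {p | p.2 = l.1 * p.1 + l.2}

/-- General position: pairwise distinct slopes (hence no two parallel, none vertical
by the representation) and no three concurrent. -/
def GenPos (F : Finset (ℝ × ℝ)) : Prop :=
  (∀ l₁ ∈ F, ∀ l₂ ∈ F, l₁ ≠ l₂ → l₁.1 ≠ l₂.1) ∧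
  (∀ l₁ ∈ F, ∀ l₂ ∈ F, ∀ l₃ ∈ F, l₁ ≠ l₂ → l₁ ≠ l₃ → l₂ ≠ l₃ →
    ¬ ∃ p, p ∈ lineSet l₁ ∧ p ∈ lineSet l₂ ∧ p ∈ lineSet l₃)

/-- Intersection point of two non-parallel lines. -/
noncomputable def interPt (l₁ l₂ : ℝ × ℝ) : ℝ × ℝ :=
  ((l₂.2 - l₁.2) / (l₁.1 - l₂.1),
   l₁.1 * ((l₂.2 - l₁.2) / (l₁.1 - l₂.1)) + l₁.2)

/-- The point `p` lies strictly below the line `l` (the line is strictly above `p`). -/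
def Below (p : ℝ × ℝ) (l : ℝ × ℝ) : Prop := p.2 < l.1 * p.1 + l.2

/-- The point `p` lies strictly above the line `l` (the line is strictly below `p`). -/
def Above (p : ℝ × ℝ) (l : ℝ × ℝ) : Prop := p.2 > l.1 * p.1 + l.2

/-- A sequence of lines ordered by strictly increasing slope forms a cup: each
intermediate line lies strictly above the intersection of its two neighbours. -/
def IsCup {k : ℕ} (a : Fin k → ℝ × ℝ) : Prop :=
  StrictMono (fun i => (a i).1) ∧
  ∀ i : Fin k, ∀ _h1 : 0 < (i : ℕ), ∀ h2 : (i : ℕ) + 1 < k,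
    Below (interPt (a ⟨(i : ℕ) - 1, by omega⟩) (a ⟨(i : ℕ) + 1, h2⟩)) (a i)

/-- A sequence of lines ordered by strictly increasing slope forms a cap: each
intermediate line lies strictly below the intersection of its two neighbours. -/
def IsCap {k : ℕ} (a : Fin k → ℝ × ℝ) : Prop :=
  StrictMono (fun i => (a i).1) ∧
  ∀ i : Fin k, ∀ _h1 : 0 < (i : ℕ), ∀ h2 : (i : ℕ) + 1 < k,
    Above (interPt (a ⟨(i : ℕ) - 1, by omega⟩) (a ⟨(i : ℕ) + 1, h2⟩)) (a i)

/-- `F` contains `k` lines forming a `k`-cup. -/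
def HasCup (k : ℕ) (F : Finset (ℝ × ℝ)) : Prop :=
  ∃ a : Fin k → ℝ × ℝ, (∀ i, a i ∈ F) ∧ IsCup a

/-- `F` contains `l` lines forming an `l`-cap. -/
def HasCap (l : ℕ) (F : Finset (ℝ × ℝ)) : Prop :=
  ∃ a : Fin l → ℝ × ℝ, (∀ i, a i ∈ F) ∧ IsCap a

/-- Union of the lines of a family. -/
def linesUnion (F : Finset (ℝ × ℝ)) : Set (ℝ × ℝ) := ⋃ l ∈ F, lineSet l

/-- `P` is a cell of the arrangement of `F`: a connected component of the
complement of the union of the lines. -/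
def IsCellOf (F : Finset (ℝ × ℝ)) (P : Set (ℝ × ℝ)) : Prop :=
  ∃ p ∈ (linesUnion F)ᶜ, P = connectedComponentIn (linesUnion F)ᶜ p

/-- The line `l` contributes a (positive length) segment to the boundary of `P`:
the closure of `P` meets `l` in more than one point. -/
def Contributes (l : ℝ × ℝ) (P : Set (ℝ × ℝ)) : Prop :=
  ∃ p q : ℝ × ℝ, p ≠ q ∧ p ∈ closure P ∩ lineSet l ∧ q ∈ closure P ∩ lineSet l

/-- `P` is a cell of the arrangement of `F` with a boundary segment on every line of `F`. -/
def IsNCell (F : Finset (ℝ × ℝ)) (P : Set (ℝ × ℝ)) : Prop :=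
  IsCellOf F P ∧ ∀ l ∈ F, Contributes l P

/-- The lines of `F` are in convex position: they define a cell bounded by all of them. -/
def ConvexPos (F : Finset (ℝ × ℝ)) : Prop := ∃ P, IsNCell F P
/-- `L` is a line of the plane (general position not assumed here). -/
def IsLine (L : Set (ℝ × ℝ)) : Prop :=
  ∃ a b c : ℝ, (a, b) ≠ ((0 : ℝ), (0 : ℝ)) ∧ L = {p : ℝ × ℝ | a * p.1 + b * p.2 = c}

/-- `L` is tangent to the convex body `K`: it meets `K` but not its interior. -/
def IsTangentLine (L K : Set (ℝ × ℝ)) : Prop :=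
  (L ∩ K).Nonempty ∧ L ∩ interior K = ∅

/-!
A common tangent either has `P` and `Q` on the same closed side (an outer tangent) or separates
them (an inner tangent); we show there are at most two of each kind.

Three outer tangents cross a line strictly separating `P` from `Q` in three collinear points,
each inside the contact segment of its tangent. The tangent through the middle point has the
other two points in its closed half-plane, hence passes through one of them, and a tangent
through an interior point of another tangent's contact segment is that tangent.

Three inner tangents, normalised by `φ (q₀ - p₀) = 1` with `p₀ ∈ P`, `q₀ ∈ int Q`, have collinear
normals in the dual plane. Evaluating at the two contact points of the middle tangent shows
that it is the same convex combination of the other two, constants included; a proper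
combination would put both of its contact points on a neighbouring tangent.
-/

open Module

lemma Finset.card_le_two_of_eq_or_eq_or_eq {α : Type*} {s : Finset α}
    (h : ∀ a ∈ s, ∀ b ∈ s, ∀ c ∈ s, a = b ∨ a = c ∨ b = c) : s.card ≤ 2 := by
  by_contra! hs
  obtain ⟨a, ha, b, hb, c, hc, hab, hac, hbc⟩ := Finset.two_lt_card.1 hs
  rcases h a ha b hb c hc with h | h | h <;> contradiction

namespace Module.Dual

variable {E : Type*} [AddCommGroup E] [Module ℝ E]

lemma apply_eq_of_mem_openSegment (f : Dual ℝ E) {c : ℝ} {x y z : E}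
    (hz : z ∈ openSegment ℝ x y) (hx : f x ≤ c) (hy : f y ≤ c) (hfz : f z = c) :
    f x = c ∧ f y = c := by
  obtain ⟨a, b, ha, hb, hab, rfl⟩ := hz
  simp only [map_add, map_smul, smul_eq_mul] at hfz
  have hsum : a * (c - f x) + b * (c - f y) = 0 := by linear_combination c * hab - hfz
  have hxa := mul_nonneg ha.le (sub_nonneg.2 hx)
  have hyb := mul_nonneg hb.le (sub_nonneg.2 hy)
  have hx' := (mul_eq_zero.1 (by linarith : a * (c - f x) = 0)).resolve_left ha.ne'
  have hy' := (mul_eq_zero.1 (by linarith : b * (c - f y) = 0)).resolve_left hb.ne'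
  constructor <;> linarith

lemma apply_eq_or_apply_eq_of_wbtw (f : Dual ℝ E) {c : ℝ} {x y z : E}
    (hz : Wbtw ℝ x z y) (hx : f x ≤ c) (hy : f y ≤ c) (hfz : f z = c) :
    f x = c ∨ f y = c := by
  obtain ⟨a, b, ha, hb, hab, rfl⟩ := mem_segment_iff_wbtw.2 hz
  simp only [map_add, map_smul, smul_eq_mul] at hfz
  have hsum : a * (c - f x) + b * (c - f y) = 0 := by linear_combination c * hab - hfz
  rcases ha.eq_or_lt with rfl | ha
  · right; simp_all
  · left
    have hyb := mul_nonneg hb (sub_nonneg.2 hy)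
    have := (mul_eq_zero.1 (by nlinarith : a * (c - f x) = 0)).resolve_left ha.ne'
    linarith

lemma exists_mem_openSegment_apply_eq (f : Dual ℝ E) {m : ℝ} {x y : E}
    (hx : f x < m) (hy : m < f y) : ∃ z ∈ openSegment ℝ x y, f z = m := by
  have hxy : 0 < f y - f x := by linarith
  refine ⟨((f y - m) / (f y - f x)) • x + ((m - f x) / (f y - f x)) • y,
    ⟨_, _, div_pos (by linarith) hxy, div_pos (by linarith) hxy, ?_, rfl⟩, ?_⟩
  · field_simp; ring
  · simp only [map_add, map_smul, smul_eq_mul]; field_simp; ring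

variable {f g : Dual ℝ E} {c d : ℝ}

lemma collinear_of_forall_apply_eq (hE : finrank ℝ E = 2) (hf : f ≠ 0) {s : Set E}
    (hs : ∀ p ∈ s, f p = c) : Collinear ℝ s := by
  have : FiniteDimensional ℝ E := Module.finite_of_finrank_eq_succ hE
  have hker : finrank ℝ (LinearMap.ker f) = 1 := by
    have := finrank_ker_add_one_of_ne_zero hf; omega
  have hle : vectorSpan ℝ s ≤ LinearMap.ker f := by
    rw [vectorSpan_def, Submodule.span_le]
    rintro _ ⟨p, hp, q, hq, rfl⟩
    simp [hs p hp, hs q hq]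
  rw [collinear_iff_finrank_le_one]
  exact hker ▸ Submodule.finrank_mono hle

lemma setOf_apply_eq_subset (hE : finrank ℝ E = 2) (hf : f ≠ 0) {u v : E} (huv : u ≠ v)
    (hfu : f u = c) (hfv : f v = c) (hgu : g u = d) (hgv : g v = d) :
    {p | f p = c} ⊆ {p | g p = d} := by
  intro p hp
  have hcol : Collinear ℝ {u, v, p} := collinear_of_forall_apply_eq hE hf <| by
    simp only [mem_insert_iff, mem_singleton_iff]
    rintro q (rfl | rfl | rfl) <;> assumption
  obtain ⟨r, rfl⟩ := mem_affineSpan_pair_iff_exists_lineMap_eq.1 <|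
    hcol.mem_affineSpan_of_mem_of_ne (p₃ := p) (by simp) (by simp) (by simp) huv
  simp only [mem_ofPred_eq, AffineMap.lineMap_apply_module, map_add, map_smul, smul_eq_mul,
    hgu, hgv]
  ring

lemma setOf_apply_eq_eq (hE : finrank ℝ E = 2) (hf : f ≠ 0) (hg : g ≠ 0) {u v : E}
    (huv : u ≠ v) (hfu : f u = c) (hfv : f v = c) (hgu : g u = d) (hgv : g v = d) :
    {p | f p = c} = {p | g p = d} :=
  (setOf_apply_eq_subset hE hf huv hfu hfv hgu hgv).antisymm
    (setOf_apply_eq_subset hE hg huv hgu hgv hfu hfv)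

lemma setOf_eq_or_setOf_eq_of_wbtw (hE : finrank ℝ E = 2) {φ₁ φ₂ φ₃ : Dual ℝ E}
    {c₁ c₂ c₃ : ℝ} (hφ : Wbtw ℝ φ₁ φ₂ φ₃) (hφ₁ : φ₁ ≠ 0) (hφ₂ : φ₂ ≠ 0) {x y : E} (hxy : x ≠ y)
    (hx₁ : φ₁ x ≤ c₁) (hy₁ : c₁ ≤ φ₁ y) (hx₃ : φ₃ x ≤ c₃) (hy₃ : c₃ ≤ φ₃ y)
    (hx₂ : φ₂ x = c₂) (hy₂ : φ₂ y = c₂) :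
    {p | φ₂ p = c₂} = {p | φ₁ p = c₁} ∨ {p | φ₂ p = c₂} = {p | φ₃ p = c₃} := by
  obtain ⟨a, b, ha, hb, hab, rfl⟩ := mem_segment_iff_wbtw.2 hφ
  have hx := hx₂
  have hy := hy₂
  simp only [LinearMap.add_apply, LinearMap.smul_apply, smul_eq_mul] at hx hy
  -- `x` and `y` lie on opposite sides of the lines of `φ₁` and `φ₃`, which pins down `c₂`.
  have hc : c₂ = a * c₁ + b * c₃ := le_antisymm
    (by nlinarith [mul_le_mul_of_nonneg_left hx₁ ha, mul_le_mul_of_nonneg_left hx₃ hb])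
    (by nlinarith [mul_le_mul_of_nonneg_left hy₁ ha, mul_le_mul_of_nonneg_left hy₃ hb])
  rcases ha.eq_or_lt with rfl | ha
  · right
    obtain rfl : b = 1 := by linarith
    simp [hc]
  · left
    have hx₁' : φ₁ x = c₁ := by
      have := mul_le_mul_of_nonneg_left hx₃ hb
      have := (mul_eq_zero.1 (by nlinarith : a * (c₁ - φ₁ x) = 0)).resolve_left ha.ne'
      linarith
    have hy₁' : φ₁ y = c₁ := by
      have := mul_le_mul_of_nonneg_left hy₃ hb
      have := (mul_eq_zero.1 (by nlinarith : a * (φ₁ y - c₁) = 0)).resolve_left ha.ne'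
      linarith
    exact setOf_apply_eq_eq hE hφ₂ hφ₁ hxy hx₂ hy₂ hx₁' hy₁'

end Module.Dual

section Tangents

variable {E : Type*} [AddCommGroup E] [Module ℝ E] {P Q L : Set E}

def IsOuterTangent (P Q L : Set E) : Prop :=
  ∃ (f : Dual ℝ E) (c : ℝ), f ≠ 0 ∧ L = {p | f p = c} ∧ (L ∩ P).Nonempty ∧ (L ∩ Q).Nonempty ∧
    P ⊆ {p | f p ≤ c} ∧ Q ⊆ {p | f p ≤ c}

def IsInnerTangent (P Q L : Set E) : Prop :=
  ∃ (f : Dual ℝ E) (c : ℝ), f ≠ 0 ∧ L = {p | f p = c} ∧ (L ∩ P).Nonempty ∧ (L ∩ Q).Nonempty ∧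
    P ⊆ {p | f p ≤ c} ∧ Q ⊆ {p | c ≤ f p}

lemma IsOuterTangent.mem_or_mem_of_wbtw (hL : IsOuterTangent P Q L) {z₁ z₂ z₃ : E}
    (h : Wbtw ℝ z₁ z₂ z₃) (hz₁ : z₁ ∈ convexHull ℝ (P ∪ Q)) (hz₃ : z₃ ∈ convexHull ℝ (P ∪ Q))
    (hz₂ : z₂ ∈ L) : z₁ ∈ L ∨ z₃ ∈ L := by
  obtain ⟨f, c, -, rfl, -, -, hPf, hQf⟩ := hL
  have hK : convexHull ℝ (P ∪ Q) ⊆ {p | f p ≤ c} :=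
    convexHull_min (union_subset hPf hQf) (convex_halfSpace_le f.isLinear c)
  exact f.apply_eq_or_apply_eq_of_wbtw h (hK hz₁) (hK hz₃) hz₂

lemma IsOuterTangent.exists_crossing (hE : finrank ℝ E = 2) (hPQ : Disjoint P Q)
    (hL : IsOuterTangent P Q L) (g : Dual ℝ E) {m : ℝ} (hgP : ∀ p ∈ P, g p < m)
    (hgQ : ∀ q ∈ Q, m < g q) :
    ∃ z ∈ L, g z = m ∧ z ∈ convexHull ℝ (P ∪ Q) ∧
      ∀ L', IsOuterTangent P Q L' → z ∈ L' → L' = L := by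
  obtain ⟨f, c, hf, rfl, ⟨x, hxL, hxP⟩, ⟨y, hyL, hyQ⟩, -, -⟩ := hL
  obtain ⟨z, hz, hgz⟩ := g.exists_mem_openSegment_apply_eq (hgP x hxP) (hgQ y hyQ)
  refine ⟨z, (convex_hyperplane f.isLinear c).openSegment_subset hxL hyL hz, hgz,
    segment_subset_convexHull (mem_union_left Q hxP) (mem_union_right P hyQ)
      (openSegment_subset_segment ℝ x y hz),
    ?_⟩
  rintro L' ⟨f', c', hf', rfl, -, -, hPf', hQf'⟩ hzL'
  obtain ⟨hx', hy'⟩ := f'.apply_eq_of_mem_openSegment hz (hPf' hxP) (hQf' hyQ) hzL'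
  exact Dual.setOf_apply_eq_eq hE hf' hf (hPQ.ne_of_mem hxP hyQ) hx' hy' hxL hyL

lemma IsInnerTangent.exists_normalized (hL : IsInnerTangent P Q L) {p₀ q₀ : E} (hp₀ : p₀ ∈ P)
    (hq₀ : q₀ ∈ Q) (hq₀L : q₀ ∉ L) :
    ∃ (φ : Dual ℝ E) (c : ℝ), φ (q₀ - p₀) = 1 ∧ L = {p | φ p = c} ∧
      P ⊆ {p | φ p ≤ c} ∧ Q ⊆ {p | c ≤ φ p} := by
  obtain ⟨f, c, -, rfl, -, -, hPf, hQf⟩ := hL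
  have hpos : 0 < f (q₀ - p₀) := by
    have hq : c < f q₀ := (hQf hq₀).lt_of_ne (Ne.symm hq₀L)
    have hp : f p₀ ≤ c := hPf hp₀
    rw [map_sub]; linarith
  set k := (f (q₀ - p₀))⁻¹
  have hk : 0 < k := inv_pos.2 hpos
  refine ⟨k • f, k * c, inv_mul_cancel₀ hpos.ne', ?_, fun p hp => ?_, fun p hp => ?_⟩
  · ext p; simp [mul_right_inj' hk.ne']
  · simpa using mul_le_mul_of_nonneg_left (hPf hp) hk.le
  · simpa using mul_le_mul_of_nonneg_left (hQf hp) hk.le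

lemma IsInnerTangent.eq_or_eq_of_wbtw (hE : finrank ℝ E = 2) (hPQ : Disjoint P Q)
    {φ₁ φ₂ φ₃ : Dual ℝ E} {c₁ c₂ c₃ : ℝ} (hφ : Wbtw ℝ φ₁ φ₂ φ₃) (hφ₁ : φ₁ ≠ 0) (hφ₂ : φ₂ ≠ 0)
    (h₂ : IsInnerTangent P Q {p | φ₂ p = c₂})
    (hP₁ : P ⊆ {p | φ₁ p ≤ c₁}) (hQ₁ : Q ⊆ {p | c₁ ≤ φ₁ p})
    (hP₃ : P ⊆ {p | φ₃ p ≤ c₃}) (hQ₃ : Q ⊆ {p | c₃ ≤ φ₃ p}) :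
    {p | φ₂ p = c₂} = {p | φ₁ p = c₁} ∨ {p | φ₂ p = c₂} = {p | φ₃ p = c₃} := by
  obtain ⟨-, -, -, -, ⟨x, hx₂, hxP⟩, ⟨y, hy₂, hyQ⟩, -, -⟩ := h₂
  exact Dual.setOf_eq_or_setOf_eq_of_wbtw hE hφ hφ₁ hφ₂ (hPQ.ne_of_mem hxP hyQ) (hP₁ hxP)
    (hQ₁ hyQ) (hP₃ hxP) (hQ₃ hyQ) hx₂ hy₂

theorem IsInnerTangent.eq_or_eq_or_eq (hE : finrank ℝ E = 2) (hPQ : Disjoint P Q) {q₀ : E}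
    (hq₀ : q₀ ∈ Q) {L₁ L₂ L₃ : Set E} (h₁ : IsInnerTangent P Q L₁) (h₂ : IsInnerTangent P Q L₂)
    (h₃ : IsInnerTangent P Q L₃) (hq₁ : q₀ ∉ L₁) (hq₂ : q₀ ∉ L₂) (hq₃ : q₀ ∉ L₃) :
    L₁ = L₂ ∨ L₁ = L₃ ∨ L₂ = L₃ := by
  obtain ⟨p₀, hp₀⟩ : P.Nonempty := by
    obtain ⟨-, -, -, -, ⟨x, -, hx⟩, -⟩ := h₁
    exact ⟨x, hx⟩
  obtain ⟨φ₁, c₁, hφ₁, rfl, hP₁, hQ₁⟩ := h₁.exists_normalized hp₀ hq₀ hq₁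
  obtain ⟨φ₂, c₂, hφ₂, rfl, hP₂, hQ₂⟩ := h₂.exists_normalized hp₀ hq₀ hq₂
  obtain ⟨φ₃, c₃, hφ₃, rfl, hP₃, hQ₃⟩ := h₃.exists_normalized hp₀ hq₀ hq₃
  have hne : ∀ {φ : Dual ℝ E}, φ (q₀ - p₀) = 1 → φ ≠ 0 := by
    rintro φ hφ rfl; simp at hφ
  have hcol : Collinear ℝ {φ₁, φ₂, φ₃} :=
    Dual.collinear_of_forall_apply_eq (Subspace.dual_finrank_eq.trans hE)
      (f := Dual.eval ℝ E (q₀ - p₀))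
      (fun h => one_ne_zero (hφ₁.symm.trans (LinearMap.congr_fun h φ₁))) <| by
        simp only [mem_insert_iff, mem_singleton_iff]
        rintro φ (rfl | rfl | rfl) <;> assumption
  rcases hcol.wbtw_or_wbtw_or_wbtw with h | h | h
  · rcases h₂.eq_or_eq_of_wbtw hE hPQ h (hne hφ₁) (hne hφ₂) hP₁ hQ₁ hP₃ hQ₃ with h | h
    · exact Or.inl h.symm
    · exact Or.inr (Or.inr h)
  · rcases h₃.eq_or_eq_of_wbtw hE hPQ h (hne hφ₂) (hne hφ₃) hP₂ hQ₂ hP₁ hQ₁ with h | h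
    · exact Or.inr (Or.inr h.symm)
    · exact Or.inr (Or.inl h.symm)
  · rcases h₁.eq_or_eq_of_wbtw hE hPQ h (hne hφ₃) (hne hφ₁) hP₃ hQ₃ hP₂ hQ₂ with h | h
    · exact Or.inr (Or.inl h)
    · exact Or.inl h

variable [TopologicalSpace E] [IsTopologicalAddGroup E] [ContinuousSMul ℝ E] {K : Set E}
  {f : Dual ℝ E} {c : ℝ}

lemma Convex.subset_setOf_apply_le (hK : Convex ℝ K) (hKf : {p | f p = c} ∩ interior K = ∅)
    {q : E} (hq : q ∈ interior K) (hfq : f q < c) : K ⊆ {p | f p ≤ c} := by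
  intro p hp
  by_contra hfp
  rw [mem_ofPred_eq, not_le] at hfp
  obtain ⟨z, hz, hfz⟩ := f.exists_mem_openSegment_apply_eq hfq hfp
  exact hKf.subset
    ⟨hfz, hK.openSegment_interior_closure_subset_interior hq (subset_closure hp) hz⟩

lemma Convex.subset_setOf_apply_le_or_subset_setOf_le_apply (hK : Convex ℝ K)
    (hKi : (interior K).Nonempty) (hKf : {p | f p = c} ∩ interior K = ∅) :
    K ⊆ {p | f p ≤ c} ∨ K ⊆ {p | c ≤ f p} := by
  obtain ⟨q, hq⟩ := hKi
  have hfq : f q ≠ c := fun h => hKf.subset ⟨h, hq⟩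
  rcases hfq.lt_or_gt with hfq | hfq
  · exact Or.inl (hK.subset_setOf_apply_le hKf hq hfq)
  · have hKf' : {p | (-f) p = -c} ∩ interior K = ∅ := by simpa using hKf
    refine Or.inr fun p hp => ?_
    simpa using hK.subset_setOf_apply_le hKf' hq (by simpa using hfq) hp

lemma isOuterTangent_or_isInnerTangent (hP : Convex ℝ P) (hPi : (interior P).Nonempty)
    (hQ : Convex ℝ Q) (hQi : (interior Q).Nonempty) (hf : f ≠ 0)
    (hLP : ({p | f p = c} ∩ P).Nonempty) (hLP' : {p | f p = c} ∩ interior P = ∅)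
    (hLQ : ({p | f p = c} ∩ Q).Nonempty) (hLQ' : {p | f p = c} ∩ interior Q = ∅) :
    IsOuterTangent P Q {p | f p = c} ∨ IsInnerTangent P Q {p | f p = c} := by
  wlog hPf : P ⊆ {p | f p ≤ c} generalizing f c
  · have hL : {p | (-f) p = -c} = {p | f p = c} := by ext; simp
    rw [← hL] at hLP hLP' hLQ hLQ' ⊢
    refine this (neg_ne_zero.2 hf) hLP hLP' hLQ hLQ' fun p hp => ?_
    have := (hP.subset_setOf_apply_le_or_subset_setOf_le_apply hPi (hL ▸ hLP')).resolve_left hPf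
    simpa using this hp
  rcases hQ.subset_setOf_apply_le_or_subset_setOf_le_apply hQi hLQ' with hQf | hQf
  · exact Or.inl ⟨f, c, hf, rfl, hLP, hLQ, hPf, hQf⟩
  · exact Or.inr ⟨f, c, hf, rfl, hLP, hLQ, hPf, hQf⟩

theorem IsOuterTangent.eq_or_eq_or_eq [LocallyConvexSpace ℝ E] [T2Space E]
    (hE : finrank ℝ E = 2) (hP : Convex ℝ P) (hPc : IsCompact P) (hQ : Convex ℝ Q)
    (hQc : IsCompact Q) (hPQ : Disjoint P Q) {L₁ L₂ L₃ : Set E} (h₁ : IsOuterTangent P Q L₁)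
    (h₂ : IsOuterTangent P Q L₂) (h₃ : IsOuterTangent P Q L₃) :
    L₁ = L₂ ∨ L₁ = L₃ ∨ L₂ = L₃ := by
  obtain ⟨g, m, v, hgP, hmv, hgQ⟩ :=
    geometric_hahn_banach_compact_closed hP hPc hQ hQc.isClosed hPQ
  have hgQ' : ∀ q ∈ Q, m < g q := fun q hq => hmv.trans (hgQ q hq)
  have hg : (g : Dual ℝ E) ≠ 0 := by
    obtain ⟨-, -, -, -, ⟨x, -, hx⟩, ⟨y, -, hy⟩, -⟩ := h₁
    intro h
    have hxy := (hgP x hx).trans (hgQ' y hy)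
    rw [← ContinuousLinearMap.coe_coe g, h] at hxy
    exact hxy.false
  obtain ⟨z₁, hz₁L, hz₁g, hz₁K, hz₁⟩ := h₁.exists_crossing hE hPQ g hgP hgQ'
  obtain ⟨z₂, hz₂L, hz₂g, hz₂K, hz₂⟩ := h₂.exists_crossing hE hPQ g hgP hgQ'
  obtain ⟨z₃, hz₃L, hz₃g, hz₃K, hz₃⟩ := h₃.exists_crossing hE hPQ g hgP hgQ'
  have hcol : Collinear ℝ {z₁, z₂, z₃} := Dual.collinear_of_forall_apply_eq hE hg <| by
    simp only [mem_insert_iff, mem_singleton_iff]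
    rintro q (rfl | rfl | rfl) <;> assumption
  rcases hcol.wbtw_or_wbtw_or_wbtw with h | h | h
  · rcases h₂.mem_or_mem_of_wbtw h hz₁K hz₃K hz₂L with h | h
    · exact Or.inl (hz₁ L₂ h₂ h).symm
    · exact Or.inr (Or.inr (hz₃ L₂ h₂ h))
  · rcases h₃.mem_or_mem_of_wbtw h hz₂K hz₁K hz₃L with h | h
    · exact Or.inr (Or.inr (hz₂ L₃ h₃ h).symm)
    · exact Or.inr (Or.inl (hz₁ L₃ h₃ h).symm)
  · rcases h₁.mem_or_mem_of_wbtw h hz₃K hz₂K hz₁L with h | h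
    · exact Or.inr (Or.inl (hz₃ L₁ h₁ h))
    · exact Or.inl (hz₂ L₁ h₁ h)

end Tangents

lemma IsLine.exists_dual {L : Set (ℝ × ℝ)} (hL : IsLine L) :
    ∃ (f : Dual ℝ (ℝ × ℝ)) (c : ℝ), f ≠ 0 ∧ L = {p | f p = c} := by
  obtain ⟨a, b, c, hab, rfl⟩ := hL
  refine ⟨a • LinearMap.fst ℝ ℝ ℝ + b • LinearMap.snd ℝ ℝ ℝ, c, fun h => hab ?_, by ext; simp⟩
  have ha := LinearMap.congr_fun h (1, 0)
  have hb := LinearMap.congr_fun h (0, 1)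
  simp only [LinearMap.add_apply, LinearMap.smul_apply, LinearMap.fst_apply, LinearMap.snd_apply,
    smul_eq_mul, LinearMap.zero_apply] at ha hb
  simp_all

/-- Two disjoint bounded convex bodies in the plane have at most 4 common tangent lines. -/
theorem stmt3 (P Q : Set (ℝ × ℝ)) (hPconv : Convex ℝ P) (hQconv : Convex ℝ Q)
    (hPcomp : IsCompact P) (hQcomp : IsCompact Q)
    (hPint : (interior P).Nonempty) (hQint : (interior Q).Nonempty)
    (hdisj : Disjoint P Q)
    (S : Finset (Set (ℝ × ℝ)))
    (hS : ∀ L ∈ S, IsLine L ∧ IsTangentLine L P ∧ IsTangentLine L Q) :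
    S.card ≤ 4 := by
  classical
  have hE : finrank ℝ (ℝ × ℝ) = 2 := by simp
  have htype : ∀ L ∈ S, IsOuterTangent P Q L ∨ IsInnerTangent P Q L := by
    intro L hL
    obtain ⟨hL, ⟨hLP, hLP'⟩, ⟨hLQ, hLQ'⟩⟩ := hS L hL
    obtain ⟨f, c, hf, rfl⟩ := hL.exists_dual
    exact isOuterTangent_or_isInnerTangent hPconv hPint hQconv hQint hf hLP hLP' hLQ hLQ'
  obtain ⟨q₀, hq₀⟩ := hQint
  have hq₀S : ∀ L ∈ S, q₀ ∉ L := fun L hL hq => (hS L hL).2.2.2.subset ⟨hq, hq₀⟩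
  rw [← S.card_filter_add_card_filter_not (IsOuterTangent P Q)]
  refine Nat.add_le_add (Finset.card_le_two_of_eq_or_eq_or_eq ?_)
    (Finset.card_le_two_of_eq_or_eq_or_eq ?_) <;>
    simp only [Finset.mem_filter] <;> intro L₁ h₁ L₂ h₂ L₃ h₃
  · exact h₁.2.eq_or_eq_or_eq hE hPconv hPcomp hQconv hQcomp hdisj h₂.2 h₃.2
  · exact IsInnerTangent.eq_or_eq_or_eq hE hdisj (interior_subset hq₀)
      ((htype L₁ h₁.1).resolve_left h₁.2) ((htype L₂ h₂.1).resolve_left h₂.2)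
      ((htype L₃ h₃.1).resolve_left h₃.2) (hq₀S L₁ h₁.1) (hq₀S L₂ h₂.1) (hq₀S L₃ h₃.1)
end

section
/- A family of n ≥ 5 lines in general position in the plane defines at most one n-cell, i.e., at most one connected component of the complement of the union of the lines whose boundary contains a segment from every one of the n lines. -/
open Set

noncomputable section


def fval (l r : ℝ × ℝ) : ℝ := r.2 - (l.1 * r.1 + l.2)

lemma mem_lineSet_iff (l r : ℝ × ℝ) : r ∈ lineSet l ↔ fval l r = 0 := by
  simp [lineSet, fval, sub_eq_zero]

lemma pos_trans (a b c : ℝ) (h : 0 < a*b) (h' : 0 ≤ b*c) : 0 ≤ a*c := by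
  rcases lt_trichotomy b 0 with hb | hb | hb
  · nlinarith [mul_nonneg h.le h', mul_pos_of_neg_of_neg hb hb]
  · exfalso; rw [hb, mul_zero] at h; exact lt_irrefl 0 h
  · nlinarith [mul_nonneg h.le h', mul_pos hb hb]

lemma neg_trans (a b c : ℝ) (h : a*b < 0) (h' : 0 ≤ b*c) : a*c ≤ 0 := by
  have := pos_trans (-a) b c (by nlinarith) h'
  nlinarith

lemma pos_pos_trans (a b c : ℝ) (h : 0 < a*b) (h' : 0 < a*c) : 0 < b*c := by
  rcases lt_trichotomy a 0 with ha | ha | ha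
  · nlinarith [mul_pos h h', mul_pos_of_neg_of_neg ha ha]
  · rw [ha] at h; simp at h
  · nlinarith [mul_pos h h', mul_pos ha ha]

lemma line_affine (t l : ℝ × ℝ) (σ : ℝ) (r : ℝ × ℝ) (hr : r ∈ lineSet t) :
    σ * fval l r = (σ * (t.1 - l.1)) * r.1 + (σ * (t.2 - l.2)) := by
  simp only [lineSet, mem_setOf_eq] at hr
  simp only [fval, hr]; ring

lemma inner_pair (ti tj tk : ℝ × ℝ) (σj σk : ℝ) (hσj : σj ≠ 0) (hσk : σk ≠ 0)
    (hsij : ti.1 ≠ tj.1) (hsik : ti.1 ≠ tk.1)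
    (hnc : ¬ ∃ w, w ∈ lineSet ti ∧ w ∈ lineSet tj ∧ w ∈ lineSet tk)
    (pi qi : ℝ × ℝ) (hpi : pi ∈ lineSet ti) (hqi : qi ∈ lineSet ti)
    (h1 : 0 ≤ σj * fval tj pi) (h2 : σj * fval tj qi ≤ 0)
    (h3 : 0 ≤ σk * fval tk pi) (h4 : σk * fval tk qi ≤ 0) :
    0 < (σj * (ti.1 - tj.1)) * (σk * (ti.1 - tk.1)) := by
  have hA : σj * (ti.1 - tj.1) ≠ 0 := mul_ne_zero hσj (sub_ne_zero.2 hsij)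
  have hA' : σk * (ti.1 - tk.1) ≠ 0 := mul_ne_zero hσk (sub_ne_zero.2 hsik)
  have e1 : 0 ≤ (σj * (ti.1 - tj.1)) * pi.1 + (σj * (ti.2 - tj.2)) := by
    rw [← line_affine ti tj σj pi hpi]; exact h1
  have e2 : (σj * (ti.1 - tj.1)) * qi.1 + (σj * (ti.2 - tj.2)) ≤ 0 := by
    rw [← line_affine ti tj σj qi hqi]; exact h2
  have e3 : 0 ≤ (σk * (ti.1 - tk.1)) * pi.1 + (σk * (ti.2 - tk.2)) := by
    rw [← line_affine ti tk σk pi hpi]; exact h3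
  have e4 : (σk * (ti.1 - tk.1)) * qi.1 + (σk * (ti.2 - tk.2)) ≤ 0 := by
    rw [← line_affine ti tk σk qi hqi]; exact h4
  by_contra hcon
  push_neg at hcon
  have hAA : (σj * (ti.1 - tj.1)) * (σk * (ti.1 - tk.1)) < 0 :=
    lt_of_le_of_ne hcon (mul_ne_zero hA hA')
  have hxx : pi.1 = qi.1 := by
    rcases lt_trichotomy pi.1 qi.1 with h | h | h
    · have hj : σj * (ti.1 - tj.1) ≤ 0 := by nlinarith
      have hk : σk * (ti.1 - tk.1) ≤ 0 := by nlinarith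
      nlinarith
    · exact h
    · have hj : 0 ≤ σj * (ti.1 - tj.1) := by nlinarith
      have hk : 0 ≤ σk * (ti.1 - tk.1) := by nlinarith
      nlinarith
  have ezj : (σj * (ti.1 - tj.1)) * pi.1 + (σj * (ti.2 - tj.2)) = 0 := by
    rw [hxx] at e1 ⊢; linarith
  have ezk : (σk * (ti.1 - tk.1)) * pi.1 + (σk * (ti.2 - tk.2)) = 0 := by
    rw [hxx] at e3 ⊢; linarith
  set w : ℝ × ℝ := (pi.1, ti.1 * pi.1 + ti.2) with hw
  have hwi : w ∈ lineSet ti := by simp [lineSet, hw]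
  have hwj : w ∈ lineSet tj := by
    rw [mem_lineSet_iff]
    have hla := line_affine ti tj σj w hwi
    have hwx : w.1 = pi.1 := rfl
    rw [hwx, ezj] at hla
    exact (mul_eq_zero.1 hla).resolve_left hσj
  have hwk : w ∈ lineSet tk := by
    rw [mem_lineSet_iff]
    have hla := line_affine ti tk σk w hwi
    have hwx : w.1 = pi.1 := rfl
    rw [hwx, ezk] at hla
    exact (mul_eq_zero.1 hla).resolve_left hσk
  exact hnc ⟨w, hwi, hwj, hwk⟩

lemma fval_combo (l : ℝ × ℝ) (p q : ℝ × ℝ) (θ : ℝ) :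
    fval l ((1-θ) • p + θ • q) = (1-θ) * fval l p + θ * fval l q := by
  simp only [fval, Prod.smul_fst, Prod.smul_snd, Prod.fst_add, Prod.snd_add, smul_eq_mul]
  ring

lemma combo_mem_line (t : ℝ × ℝ) (p q : ℝ × ℝ) (θ : ℝ)
    (hp : p ∈ lineSet t) (hq : q ∈ lineSet t) : (1-θ) • p + θ • q ∈ lineSet t := by
  rw [mem_lineSet_iff] at hp hq ⊢
  rw [fval_combo, hp, hq]; ring

lemma get_cross (L t : ℝ × ℝ) (σL : ℝ) (hσL : σL ≠ 0) (p q : ℝ × ℝ)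
    (hp : p ∈ lineSet t) (hq : q ∈ lineSet t)
    (ha : 0 ≤ σL * fval L p) (hb : σL * fval L q ≤ 0) :
    ∃ y : ℝ × ℝ, y ∈ lineSet t ∧ y ∈ lineSet L ∧
      ∀ (m : ℝ × ℝ) (τ : ℝ), 0 ≤ τ * fval m p → 0 ≤ τ * fval m q → 0 ≤ τ * fval m y := by
  set a := σL * fval L p with hadef
  set b := σL * fval L q with hbdef
  by_cases hab : a - b = 0
  · have ha0 : a = 0 := le_antisymm (by linarith) ha
    refine ⟨p, hp, ?_, fun m τ h1 _ => h1⟩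
    rw [mem_lineSet_iff]
    have hz : σL * fval L p = 0 := by rw [← hadef]; exact ha0
    exact (mul_eq_zero.1 hz).resolve_left hσL
  · have habpos : 0 < a - b := lt_of_le_of_ne (by linarith) (Ne.symm hab)
    set θ := a / (a - b) with hθdef
    have hθ0 : 0 ≤ θ := div_nonneg ha habpos.le
    have hθ1 : θ ≤ 1 := by
      rw [hθdef, div_le_one habpos]; linarith
    refine ⟨(1-θ) • p + θ • q, combo_mem_line t p q θ hp hq, ?_, ?_⟩
    · rw [mem_lineSet_iff]
      have hz : σL * fval L ((1-θ) • p + θ • q) = 0 := by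
        rw [fval_combo]
        have hr : σL * ((1-θ) * fval L p + θ * fval L q) = (1-θ) * a + θ * b := by
          rw [hadef, hbdef]; ring
        rw [hr, hθdef]
        field_simp
        ring
      exact (mul_eq_zero.1 hz).resolve_left hσL
    · intro m τ h1 h2
      rw [show τ * fval m ((1-θ) • p + θ • q)
            = (1-θ) * (τ * fval m p) + θ * (τ * fval m q) by rw [fval_combo]; ring]
      have c1 := mul_nonneg (by linarith : (0:ℝ) ≤ 1 - θ) h1
      have c2 := mul_nonneg hθ0 h2
      linarith


lemma pair_neg (C C' u u' : ℝ) (h1 : 0 ≤ C * (u' - u)) (h2 : 0 ≤ C' * (u - u'))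
    (hu : u ≠ u') (hC : C ≠ 0) (hC' : C' ≠ 0) : C * C' < 0 := by
  have hd : u - u' ≠ 0 := sub_ne_zero.2 hu
  have hsq : 0 < (u - u')^2 := lt_of_le_of_ne (sq_nonneg _) (Ne.symm (pow_ne_zero 2 hd))
  have hle : C * C' ≤ 0 := by nlinarith [mul_nonneg h1 h2]
  exact lt_of_le_of_ne hle (mul_ne_zero hC hC')

lemma three_neg (a b c : ℝ) (h1 : a * b < 0) (h2 : a * c < 0) (h3 : b * c < 0) : False := by
  nlinarith [mul_neg_of_pos_of_neg (mul_pos_of_neg_of_neg h1 h2) h3, sq_nonneg (a * b * c)]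

lemma inner_three (σ1 σ2 σ3 s1 s2 s3 : ℝ)
    (h1 : 0 < (σ2 * (s1 - s2)) * (σ3 * (s1 - s3)))
    (h2 : 0 < (σ1 * (s2 - s1)) * (σ3 * (s2 - s3)))
    (h3 : 0 < (σ1 * (s3 - s1)) * (σ2 * (s3 - s2))) : False := by
  nlinarith [mul_pos (mul_pos h1 h2) h3,
    sq_nonneg (σ1 * σ2 * σ3 * (s1 - s2) * (s1 - s3) * (s2 - s3))]

lemma outer_triple (L t1 t2 t3 : ℝ × ℝ) (τ1 τ2 τ3 : ℝ)
    (hτ1 : τ1 ≠ 0) (hτ2 : τ2 ≠ 0) (hτ3 : τ3 ≠ 0)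
    (hs1 : L.1 ≠ t1.1) (hs2 : L.1 ≠ t2.1) (hs3 : L.1 ≠ t3.1)
    (hnc12 : ¬ ∃ w, w ∈ lineSet L ∧ w ∈ lineSet t1 ∧ w ∈ lineSet t2)
    (hnc13 : ¬ ∃ w, w ∈ lineSet L ∧ w ∈ lineSet t1 ∧ w ∈ lineSet t3)
    (hnc23 : ¬ ∃ w, w ∈ lineSet L ∧ w ∈ lineSet t2 ∧ w ∈ lineSet t3)
    (y1 y2 y3 : ℝ × ℝ)
    (hy1L : y1 ∈ lineSet L) (hy2L : y2 ∈ lineSet L) (hy3L : y3 ∈ lineSet L)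
    (hy1 : y1 ∈ lineSet t1) (hy2 : y2 ∈ lineSet t2) (hy3 : y3 ∈ lineSet t3)
    (h12 : 0 ≤ τ2 * fval t2 y1) (h13 : 0 ≤ τ3 * fval t3 y1)
    (h21 : 0 ≤ τ1 * fval t1 y2) (h23 : 0 ≤ τ3 * fval t3 y2)
    (h31 : 0 ≤ τ1 * fval t1 y3) (h32 : 0 ≤ τ2 * fval t2 y3) : False := by
  have huy : ∀ y : ℝ × ℝ, y ∈ lineSet L → y = (y.1, L.1 * y.1 + L.2) := by
    intro y hy
    simp only [lineSet, mem_setOf_eq] at hy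
    exact Prod.ext rfl hy
  have hune : ∀ (ya yb : ℝ × ℝ), ya ∈ lineSet L → yb ∈ lineSet L → ya.1 = yb.1 → ya = yb := by
    intro ya yb hya hyb h
    rw [huy ya hya, huy yb hyb, h]
  have e11 : (τ1 * (L.1 - t1.1)) * y1.1 + (τ1 * (L.2 - t1.2)) = 0 := by
    rw [← line_affine L t1 τ1 y1 hy1L]
    rw [mem_lineSet_iff] at hy1; rw [hy1]; ring
  have e22 : (τ2 * (L.1 - t2.1)) * y2.1 + (τ2 * (L.2 - t2.2)) = 0 := by
    rw [← line_affine L t2 τ2 y2 hy2L]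
    rw [mem_lineSet_iff] at hy2; rw [hy2]; ring
  have e33 : (τ3 * (L.1 - t3.1)) * y3.1 + (τ3 * (L.2 - t3.2)) = 0 := by
    rw [← line_affine L t3 τ3 y3 hy3L]
    rw [mem_lineSet_iff] at hy3; rw [hy3]; ring
  have e12 : 0 ≤ (τ2 * (L.1 - t2.1)) * y1.1 + (τ2 * (L.2 - t2.2)) := by
    rw [← line_affine L t2 τ2 y1 hy1L]; exact h12
  have e13 : 0 ≤ (τ3 * (L.1 - t3.1)) * y1.1 + (τ3 * (L.2 - t3.2)) := by
    rw [← line_affine L t3 τ3 y1 hy1L]; exact h13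
  have e21 : 0 ≤ (τ1 * (L.1 - t1.1)) * y2.1 + (τ1 * (L.2 - t1.2)) := by
    rw [← line_affine L t1 τ1 y2 hy2L]; exact h21
  have e23 : 0 ≤ (τ3 * (L.1 - t3.1)) * y2.1 + (τ3 * (L.2 - t3.2)) := by
    rw [← line_affine L t3 τ3 y2 hy2L]; exact h23
  have e31 : 0 ≤ (τ1 * (L.1 - t1.1)) * y3.1 + (τ1 * (L.2 - t1.2)) := by
    rw [← line_affine L t1 τ1 y3 hy3L]; exact h31
  have e32 : 0 ≤ (τ2 * (L.1 - t2.1)) * y3.1 + (τ2 * (L.2 - t2.2)) := by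
    rw [← line_affine L t2 τ2 y3 hy3L]; exact h32
  have hC1 : τ1 * (L.1 - t1.1) ≠ 0 := mul_ne_zero hτ1 (sub_ne_zero.2 hs1)
  have hC2 : τ2 * (L.1 - t2.1) ≠ 0 := mul_ne_zero hτ2 (sub_ne_zero.2 hs2)
  have hC3 : τ3 * (L.1 - t3.1) ≠ 0 := mul_ne_zero hτ3 (sub_ne_zero.2 hs3)
  have hu12 : y1.1 ≠ y2.1 := by
    intro h
    have heq : y1 = y2 := hune y1 y2 hy1L hy2L h
    exact hnc12 ⟨y1, hy1L, hy1, by rw [heq]; exact hy2⟩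
  have hu13 : y1.1 ≠ y3.1 := by
    intro h
    have heq : y1 = y3 := hune y1 y3 hy1L hy3L h
    exact hnc13 ⟨y1, hy1L, hy1, by rw [heq]; exact hy3⟩
  have hu23 : y2.1 ≠ y3.1 := by
    intro h
    have heq : y2 = y3 := hune y2 y3 hy2L hy3L h
    exact hnc23 ⟨y2, hy2L, hy2, by rw [heq]; exact hy3⟩
  set C1 := τ1 * (L.1 - t1.1) with hC1def
  set C2 := τ2 * (L.1 - t2.1) with hC2def
  set C3 := τ3 * (L.1 - t3.1) with hC3def
  have g12 : 0 ≤ C2 * (y1.1 - y2.1) := by linarith [e12, e22]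
  have g21 : 0 ≤ C1 * (y2.1 - y1.1) := by linarith [e21, e11]
  have g13 : 0 ≤ C3 * (y1.1 - y3.1) := by linarith [e13, e33]
  have g31 : 0 ≤ C1 * (y3.1 - y1.1) := by linarith [e31, e11]
  have g23 : 0 ≤ C3 * (y2.1 - y3.1) := by linarith [e23, e33]
  have g32 : 0 ≤ C2 * (y3.1 - y2.1) := by linarith [e32, e22]
  have hC12 : C1 * C2 < 0 := pair_neg C1 C2 y1.1 y2.1 g21 g12 hu12 hC1 hC2
  have hC13 : C1 * C3 < 0 := pair_neg C1 C3 y1.1 y3.1 g31 g13 hu13 hC1 hC3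
  have hC23 : C2 * C3 < 0 := pair_neg C2 C3 y2.1 y3.1 g32 g23 hu23 hC2 hC3
  exact three_neg C1 C2 C3 hC12 hC13 hC23




lemma fval_cont (l : ℝ × ℝ) : Continuous (fval l) := by
  unfold fval; fun_prop

lemma mem_compl_iff_fval (F : Finset (ℝ × ℝ)) (r : ℝ × ℝ) :
    r ∈ (linesUnion F)ᶜ ↔ ∀ l ∈ F, fval l r ≠ 0 := by
  simp only [linesUnion, lineSet, mem_compl_iff, mem_iUnion, mem_setOf_eq, not_exists]
  constructor
  · intro h l hl
    have := h l
    simp only [hl, true_and] at this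
    simp only [fval, sub_ne_zero]
    tauto
  · intro h l
    by_cases hl : l ∈ F
    · have := h l hl
      simp only [fval, sub_ne_zero] at this
      tauto
    · tauto

lemma cell_eq (F : Finset (ℝ × ℝ)) (p : ℝ × ℝ) (hp : p ∈ (linesUnion F)ᶜ) :
    connectedComponentIn (linesUnion F)ᶜ p = {r | ∀ l ∈ F, 0 < fval l p * fval l r} := by
  have hp' : ∀ l ∈ F, fval l p ≠ 0 := (mem_compl_iff_fval F p).1 hp
  set V : Set (ℝ × ℝ) := {r | ∀ l ∈ F, 0 < fval l p * fval l r} with hV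
  have hVsub : V ⊆ (linesUnion F)ᶜ := by
    intro r hr
    rw [mem_compl_iff_fval]
    intro l hl h0
    have := hr l hl
    rw [h0, mul_zero] at this
    exact lt_irrefl 0 this
  have hpV : p ∈ V := fun l hl => mul_self_pos.2 (hp' l hl)
  have hVconv : Convex ℝ V := by
    intro x hx y hy a b ha hb hab
    intro l hl
    have hfx := hx l hl
    have hfy := hy l hl
    have hkey : fval l p * fval l (a • x + b • y)
        = a * (fval l p * fval l x) + b * (fval l p * fval l y) := by
      simp only [fval, Prod.smul_fst, Prod.smul_snd, Prod.fst_add, Prod.snd_add, smul_eq_mul]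
      have hb' : b = 1 - a := by linarith
      rw [hb']; ring
    rw [hkey]
    rcases eq_or_lt_of_le ha with h | h
    · have hb1 : b = 1 := by linarith
      rw [← h, hb1]; simpa using hfy
    · nlinarith [mul_nonneg hb hfy.le]
  apply Subset.antisymm
  · intro r hr
    intro l hl
    by_contra hcon
    push_neg at hcon
    have hrC : r ∈ (linesUnion F)ᶜ := connectedComponentIn_subset _ _ hr
    have hr' : fval l r ≠ 0 := (mem_compl_iff_fval F r).1 hrC l hl
    have hC : IsPreconnected (connectedComponentIn (linesUnion F)ᶜ p) :=
      isPreconnected_connectedComponentIn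
    have hpc : p ∈ connectedComponentIn (linesUnion F)ᶜ p := mem_connectedComponentIn hp
    -- intermediate value: fval l takes opposite signs at p, r
    have himg : IsPreconnected (fval l '' connectedComponentIn (linesUnion F)ᶜ p) :=
      hC.image _ ((fval_cont l).continuousOn)
    have hord := himg.ordConnected
    have h0mem : (0:ℝ) ∈ fval l '' connectedComponentIn (linesUnion F)ᶜ p := by
      have hprodneg : fval l p * fval l r < 0 :=
        lt_of_le_of_ne hcon (by simp [mul_eq_zero, hp' l hl, hr'])
      rcases lt_or_gt_of_ne (hp' l hl) with hneg | hpos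
      · have : 0 < fval l r := by nlinarith
        exact hord.out (mem_image_of_mem _ hpc) (mem_image_of_mem _ hr)
          ⟨hneg.le, this.le⟩
      · have : fval l r < 0 := by nlinarith
        exact hord.out (mem_image_of_mem _ hr) (mem_image_of_mem _ hpc)
          ⟨this.le, hpos.le⟩
    obtain ⟨w, hwC, hw0⟩ := h0mem
    have hwc : w ∈ (linesUnion F)ᶜ := connectedComponentIn_subset _ _ hwC
    exact (mem_compl_iff_fval F w).1 hwc l hl hw0
  · exact hVconv.isPreconnected.subset_connectedComponentIn hpV hVsub

end


/-- A family of n ≥ 5 lines in general position defines at most one n-cell. -/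
theorem stmt4 (n : ℕ) (hn : 5 ≤ n) (F : Finset (ℝ × ℝ)) (hcard : F.card = n)
    (hgp : GenPos F) (P Q : Set (ℝ × ℝ)) (hP : IsNCell F P) (hQ : IsNCell F Q) :
    P = Q := by
  classical
  obtain ⟨hPcell, hPcontr⟩ := hP
  obtain ⟨hQcell, hQcontr⟩ := hQ
  obtain ⟨p, hp, hPeq⟩ := hPcell
  obtain ⟨q, hq, hQeq⟩ := hQcell
  rw [cell_eq F p hp] at hPeq
  rw [cell_eq F q hq] at hQeq
  have hp' : ∀ l ∈ F, fval l p ≠ 0 := (mem_compl_iff_fval F p).1 hp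
  have hq' : ∀ l ∈ F, fval l q ≠ 0 := (mem_compl_iff_fval F q).1 hq
  by_cases hall : ∀ l ∈ F, 0 < fval l p * fval l q
  · rw [hPeq, hQeq]
    ext r
    simp only [mem_setOf_eq]
    constructor
    · intro h l hl
      exact pos_pos_trans _ _ _ (hall l hl) (h l hl)
    · intro h l hl
      have h' : 0 < fval l q * fval l p := by
        have := hall l hl; nlinarith
      exact pos_pos_trans _ _ _ h' (h l hl)
  · exfalso
    push_neg at hall
    obtain ⟨l₀, hl₀F, hl₀le⟩ := hall
    have hl₀ : fval l₀ p * fval l₀ q < 0 :=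
      lt_of_le_of_ne hl₀le (mul_ne_zero (hp' _ hl₀F) (hq' _ hl₀F))
    have hclP : ∀ l ∈ F, ∀ r ∈ closure P, 0 ≤ fval l p * fval l r := by
      intro l hl
      have hcl : IsClosed {r : ℝ × ℝ | 0 ≤ fval l p * fval l r} :=
        isClosed_le continuous_const (continuous_const.mul (fval_cont l))
      intro r hr
      refine closure_minimal ?_ hcl hr
      intro s hs
      rw [hPeq] at hs
      exact (hs l hl).le
    have hclQ : ∀ l ∈ F, ∀ r ∈ closure Q, 0 ≤ fval l q * fval l r := by
      intro l hl
      have hcl : IsClosed {r : ℝ × ℝ | 0 ≤ fval l q * fval l r} :=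
        isClosed_le continuous_const (continuous_const.mul (fval_cont l))
      intro r hr
      refine closure_minimal ?_ hcl hr
      intro s hs
      rw [hQeq] at hs
      exact (hs l hl).le
    have hPc : ∀ l ∈ F, ∃ r, r ∈ closure P ∧ r ∈ lineSet l := by
      intro l hl
      obtain ⟨a, b, hne, ha, hb⟩ := hPcontr l hl
      exact ⟨a, ha.1, ha.2⟩
    have hQc : ∀ l ∈ F, ∃ r, r ∈ closure Q ∧ r ∈ lineSet l := by
      intro l hl
      obtain ⟨a, b, hne, ha, hb⟩ := hQcontr l hl
      exact ⟨a, ha.1, ha.2⟩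
    set Fi := F.filter (fun l => fval l p * fval l q < 0) with hFidef
    set Fo := F.filter (fun l => 0 < fval l p * fval l q) with hFodef
    have hsub : F ⊆ Fi ∪ Fo := by
      intro l hl
      rcases lt_or_gt_of_ne (mul_ne_zero (hp' l hl) (hq' l hl)) with h | h
      · exact Finset.mem_union_left _ (Finset.mem_filter.2 ⟨hl, h⟩)
      · exact Finset.mem_union_right _ (Finset.mem_filter.2 ⟨hl, h⟩)
    have hFi2 : Fi.card ≤ 2 := by
      by_contra hcon
      push_neg at hcon
      obtain ⟨t1, t2, t3, ht1, ht2, ht3, h12, h13, h23⟩ := Finset.two_lt_card_iff.1 hcon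
      have ht1F : t1 ∈ F := (Finset.mem_filter.1 ht1).1
      have ht2F : t2 ∈ F := (Finset.mem_filter.1 ht2).1
      have ht3F : t3 ∈ F := (Finset.mem_filter.1 ht3).1
      have hneg1 : fval t1 p * fval t1 q < 0 := (Finset.mem_filter.1 ht1).2
      have hneg2 : fval t2 p * fval t2 q < 0 := (Finset.mem_filter.1 ht2).2
      have hneg3 : fval t3 p * fval t3 q < 0 := (Finset.mem_filter.1 ht3).2
      have hs12 : t1.1 ≠ t2.1 := hgp.1 t1 ht1F t2 ht2F h12
      have hs13 : t1.1 ≠ t3.1 := hgp.1 t1 ht1F t3 ht3F h13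
      have hs23 : t2.1 ≠ t3.1 := hgp.1 t2 ht2F t3 ht3F h23
      have hnc := hgp.2 t1 ht1F t2 ht2F t3 ht3F h12 h13 h23
      have hnc213 : ¬ ∃ w, w ∈ lineSet t2 ∧ w ∈ lineSet t1 ∧ w ∈ lineSet t3 := by
        rintro ⟨w, hw2, hw1, hw3⟩; exact hnc ⟨w, hw1, hw2, hw3⟩
      have hnc312 : ¬ ∃ w, w ∈ lineSet t3 ∧ w ∈ lineSet t1 ∧ w ∈ lineSet t2 := by
        rintro ⟨w, hw3, hw1, hw2⟩; exact hnc ⟨w, hw1, hw2, hw3⟩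
      obtain ⟨p1, hp1P, hp1l⟩ := hPc t1 ht1F
      obtain ⟨p2, hp2P, hp2l⟩ := hPc t2 ht2F
      obtain ⟨p3, hp3P, hp3l⟩ := hPc t3 ht3F
      obtain ⟨q1, hq1Q, hq1l⟩ := hQc t1 ht1F
      obtain ⟨q2, hq2Q, hq2l⟩ := hQc t2 ht2F
      obtain ⟨q3, hq3Q, hq3l⟩ := hQc t3 ht3F
      have A1 := inner_pair t1 t2 t3 (fval t2 p) (fval t3 p)
        (hp' t2 ht2F) (hp' t3 ht3F) hs12 hs13 hnc p1 q1 hp1l hq1l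
        (hclP t2 ht2F p1 hp1P)
        (neg_trans _ _ _ hneg2 (hclQ t2 ht2F q1 hq1Q))
        (hclP t3 ht3F p1 hp1P)
        (neg_trans _ _ _ hneg3 (hclQ t3 ht3F q1 hq1Q))
      have A2 := inner_pair t2 t1 t3 (fval t1 p) (fval t3 p)
        (hp' t1 ht1F) (hp' t3 ht3F) hs12.symm hs23 hnc213 p2 q2 hp2l hq2l
        (hclP t1 ht1F p2 hp2P)
        (neg_trans _ _ _ hneg1 (hclQ t1 ht1F q2 hq2Q))
        (hclP t3 ht3F p2 hp2P)
        (neg_trans _ _ _ hneg3 (hclQ t3 ht3F q2 hq2Q))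
      have A3 := inner_pair t3 t1 t2 (fval t1 p) (fval t2 p)
        (hp' t1 ht1F) (hp' t2 ht2F) hs13.symm hs23.symm hnc312 p3 q3 hp3l hq3l
        (hclP t1 ht1F p3 hp3P)
        (neg_trans _ _ _ hneg1 (hclQ t1 ht1F q3 hq3Q))
        (hclP t2 ht2F p3 hp3P)
        (neg_trans _ _ _ hneg2 (hclQ t2 ht2F q3 hq3Q))
      exact inner_three (fval t1 p) (fval t2 p) (fval t3 p) t1.1 t2.1 t3.1 A1 A2 A3
    have hFo2 : Fo.card ≤ 2 := by
      by_contra hcon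
      push_neg at hcon
      obtain ⟨t1, t2, t3, ht1, ht2, ht3, h12, h13, h23⟩ := Finset.two_lt_card_iff.1 hcon
      have ht1F : t1 ∈ F := (Finset.mem_filter.1 ht1).1
      have ht2F : t2 ∈ F := (Finset.mem_filter.1 ht2).1
      have ht3F : t3 ∈ F := (Finset.mem_filter.1 ht3).1
      have hpos1 : 0 < fval t1 p * fval t1 q := (Finset.mem_filter.1 ht1).2
      have hpos2 : 0 < fval t2 p * fval t2 q := (Finset.mem_filter.1 ht2).2
      have hpos3 : 0 < fval t3 p * fval t3 q := (Finset.mem_filter.1 ht3).2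
      have hne1 : l₀ ≠ t1 := by intro he; rw [he] at hl₀; linarith
      have hne2 : l₀ ≠ t2 := by intro he; rw [he] at hl₀; linarith
      have hne3 : l₀ ≠ t3 := by intro he; rw [he] at hl₀; linarith
      have hs1 : l₀.1 ≠ t1.1 := hgp.1 l₀ hl₀F t1 ht1F hne1
      have hs2 : l₀.1 ≠ t2.1 := hgp.1 l₀ hl₀F t2 ht2F hne2
      have hs3 : l₀.1 ≠ t3.1 := hgp.1 l₀ hl₀F t3 ht3F hne3
      have hnc12 := hgp.2 l₀ hl₀F t1 ht1F t2 ht2F hne1 hne2 h12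
      have hnc13 := hgp.2 l₀ hl₀F t1 ht1F t3 ht3F hne1 hne3 h13
      have hnc23 := hgp.2 l₀ hl₀F t2 ht2F t3 ht3F hne2 hne3 h23
      obtain ⟨p1, hp1P, hp1l⟩ := hPc t1 ht1F
      obtain ⟨p2, hp2P, hp2l⟩ := hPc t2 ht2F
      obtain ⟨p3, hp3P, hp3l⟩ := hPc t3 ht3F
      obtain ⟨q1, hq1Q, hq1l⟩ := hQc t1 ht1F
      obtain ⟨q2, hq2Q, hq2l⟩ := hQc t2 ht2F
      obtain ⟨q3, hq3Q, hq3l⟩ := hQc t3 ht3F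
      obtain ⟨y1, hy1t, hy1L, hy1good⟩ := get_cross l₀ t1 (fval l₀ p) (hp' l₀ hl₀F)
        p1 q1 hp1l hq1l (hclP l₀ hl₀F p1 hp1P)
        (neg_trans _ _ _ hl₀ (hclQ l₀ hl₀F q1 hq1Q))
      obtain ⟨y2, hy2t, hy2L, hy2good⟩ := get_cross l₀ t2 (fval l₀ p) (hp' l₀ hl₀F)
        p2 q2 hp2l hq2l (hclP l₀ hl₀F p2 hp2P)
        (neg_trans _ _ _ hl₀ (hclQ l₀ hl₀F q2 hq2Q))
      obtain ⟨y3, hy3t, hy3L, hy3good⟩ := get_cross l₀ t3 (fval l₀ p) (hp' l₀ hl₀F)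
        p3 q3 hp3l hq3l (hclP l₀ hl₀F p3 hp3P)
        (neg_trans _ _ _ hl₀ (hclQ l₀ hl₀F q3 hq3Q))
      have c12 : 0 ≤ fval t2 p * fval t2 y1 := hy1good t2 (fval t2 p)
        (hclP t2 ht2F p1 hp1P) (pos_trans _ _ _ hpos2 (hclQ t2 ht2F q1 hq1Q))
      have c13 : 0 ≤ fval t3 p * fval t3 y1 := hy1good t3 (fval t3 p)
        (hclP t3 ht3F p1 hp1P) (pos_trans _ _ _ hpos3 (hclQ t3 ht3F q1 hq1Q))
      have c21 : 0 ≤ fval t1 p * fval t1 y2 := hy2good t1 (fval t1 p)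
        (hclP t1 ht1F p2 hp2P) (pos_trans _ _ _ hpos1 (hclQ t1 ht1F q2 hq2Q))
      have c23 : 0 ≤ fval t3 p * fval t3 y2 := hy2good t3 (fval t3 p)
        (hclP t3 ht3F p2 hp2P) (pos_trans _ _ _ hpos3 (hclQ t3 ht3F q2 hq2Q))
      have c31 : 0 ≤ fval t1 p * fval t1 y3 := hy3good t1 (fval t1 p)
        (hclP t1 ht1F p3 hp3P) (pos_trans _ _ _ hpos1 (hclQ t1 ht1F q3 hq3Q))
      have c32 : 0 ≤ fval t2 p * fval t2 y3 := hy3good t2 (fval t2 p)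
        (hclP t2 ht2F p3 hp3P) (pos_trans _ _ _ hpos2 (hclQ t2 ht2F q3 hq3Q))
      exact outer_triple l₀ t1 t2 t3 (fval t1 p) (fval t2 p) (fval t3 p)
        (hp' t1 ht1F) (hp' t2 ht2F) (hp' t3 ht3F) hs1 hs2 hs3
        hnc12 hnc13 hnc23 y1 y2 y3 hy1L hy2L hy3L hy1t hy2t hy3t
        c12 c13 c21 c23 c31 c32
    have hle4 : n ≤ 4 := by
      calc n = F.card := hcard.symm
        _ ≤ (Fi ∪ Fo).card := Finset.card_le_card hsub
        _ ≤ Fi.card + Fo.card := Finset.card_union_le _ _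
        _ ≤ 4 := by omega
    omega
end

section
/- Let F = {a₁, …, a_N} be a family of lines in general position with equations y = mᵢx + cᵢ and m₁ < m₂ < ⋯ < m_N. If every triple aᵢ, aⱼ, a_k with i < j < k satisfies that the intersection of aᵢ and a_k lies strictly below aⱼ (i.e., every triple forms a cup in the dual sense described), then all N lines are in convex position: they define an unbounded N-cell. -/
open Set

/-!
The cell is the open region above all lines. It is convex, hence a connected component of
the complement of the arrangement, and it is unbounded upwards. The line `aᵢ` bounds it over
the abscissae where `aᵢ` is strictly the highest line: right of every crossing `aⱼ ∩ aᵢ`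
with `j < i` and left of every crossing `aᵢ ∩ aₖ` with `i < k`. The cup condition on
`(j, i, k)` puts the abscissa of `aⱼ ∩ aₖ` strictly between these two crossings, so these
abscissae form a nonempty open interval.
-/

def upperRegion (F : Finset (ℝ × ℝ)) : Set (ℝ × ℝ) := {p | ∀ l ∈ F, Above p l}

lemma sub_eq_mul_sub_interPt_fst {l₁ l₂ : ℝ × ℝ} (h : l₁.1 ≠ l₂.1) (x : ℝ) :
    (l₂.1 * x + l₂.2) - (l₁.1 * x + l₁.2) = (l₂.1 - l₁.1) * (x - (interPt l₁ l₂).1) := by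
  have hne : l₁.1 - l₂.1 ≠ 0 := sub_ne_zero.2 h
  simp only [interPt]
  field_simp
  ring

lemma lt_iff_interPt_fst_lt {l₁ l₂ : ℝ × ℝ} (h : l₁.1 < l₂.1) (x : ℝ) :
    l₁.1 * x + l₁.2 < l₂.1 * x + l₂.2 ↔ (interPt l₁ l₂).1 < x := by
  rw [← sub_pos, sub_eq_mul_sub_interPt_fst h.ne, mul_pos_iff_of_pos_left (sub_pos.2 h), sub_pos]

lemma lt_iff_lt_interPt_fst {l₁ l₂ : ℝ × ℝ} (h : l₁.1 < l₂.1) (x : ℝ) :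
    l₂.1 * x + l₂.2 < l₁.1 * x + l₁.2 ↔ x < (interPt l₁ l₂).1 := by
  rw [← sub_neg, sub_eq_mul_sub_interPt_fst h.ne, ← smul_eq_mul,
    smul_neg_iff_of_pos_left (sub_pos.2 h), sub_neg]

lemma interPt_mem_lineSet_right {l₁ l₂ : ℝ × ℝ} (h : l₁.1 ≠ l₂.1) :
    interPt l₁ l₂ ∈ lineSet l₂ := by
  have := sub_eq_mul_sub_interPt_fst h (interPt l₁ l₂).1
  simp only [sub_self, mul_zero, sub_eq_zero] at this
  exact this.symm

lemma convex_upperRegion (F : Finset (ℝ × ℝ)) : Convex ℝ (upperRegion F) := by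
  have hhalf : ∀ l : ℝ × ℝ, {p : ℝ × ℝ | Above p l} = {p | l.2 < p.2 - l.1 * p.1} := by
    intro l; ext p
    show l.1 * p.1 + l.2 < p.2 ↔ l.2 < p.2 - l.1 * p.1
    exact lt_sub_iff_add_lt'.symm
  have hupper : upperRegion F = ⋂ l ∈ F, {p | Above p l} := by
    ext p; simp [upperRegion]
  rw [hupper]
  refine convex_iInter₂ fun l _ => ?_
  rw [hhalf]
  exact convex_halfSpace_gt ((LinearMap.snd ℝ ℝ ℝ - l.1 • LinearMap.fst ℝ ℝ ℝ).isLinear) _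

lemma upperRegion_subset_compl_linesUnion (F : Finset (ℝ × ℝ)) :
    upperRegion F ⊆ (linesUnion F)ᶜ := by
  intro p hp hmem
  simp only [linesUnion, Set.mem_iUnion] at hmem
  obtain ⟨l, hl, hpl⟩ := hmem
  exact (hp l hl).ne' hpl

lemma connectedComponentIn_compl_linesUnion {F : Finset (ℝ × ℝ)} {p : ℝ × ℝ}
    (hp : p ∈ upperRegion F) :
    connectedComponentIn (linesUnion F)ᶜ p = upperRegion F := by
  refine subset_antisymm (fun q hq l hl => ?_) ((convex_upperRegion F).isPreconnected
    |>.subset_connectedComponentIn hp (upperRegion_subset_compl_linesUnion F))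
  -- The height above `l` is continuous and never vanishes on the component, so keeps its sign.
  have hheight := (isPreconnected_connectedComponentIn (F := (linesUnion F)ᶜ) (x := p)).lt_of_ne
    (f := fun r : ℝ × ℝ => r.2 - (l.1 * r.1 + l.2)) (b := 0) (by fun_prop)
    (fun r hr hzero => connectedComponentIn_subset _ _ hr
      (Set.mem_biUnion (t := lineSet) hl (show r ∈ lineSet l from sub_eq_zero.1 hzero)))
    ⟨p, mem_connectedComponentIn (upperRegion_subset_compl_linesUnion F hp), sub_pos.2 (hp l hl)⟩
    hq
  exact sub_pos.1 hheight

lemma mk_mem_upperRegion {F : Finset (ℝ × ℝ)} {p : ℝ × ℝ} (hp : p ∈ upperRegion F) {y : ℝ}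
    (hy : p.2 ≤ y) : (p.1, y) ∈ upperRegion F :=
  fun l hl => lt_of_lt_of_le (hp l hl) hy

lemma upperRegion_nonempty (F : Finset (ℝ × ℝ)) : (upperRegion F).Nonempty := by
  obtain ⟨M, hM⟩ := (F.image Prod.snd).exists_le
  refine ⟨(0, M + 1), fun l hl => ?_⟩
  have := hM l.2 (Finset.mem_image_of_mem _ hl)
  simp only [mul_zero, zero_add, Above]
  linarith

lemma not_isBounded_upperRegion (F : Finset (ℝ × ℝ)) :
    ¬ Bornology.IsBounded (upperRegion F) := by
  intro hbdd
  obtain ⟨p, hp⟩ := upperRegion_nonempty F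
  obtain ⟨M, hM⟩ := (LipschitzWith.prod_snd.isBounded_image hbdd).bddAbove
  have := hM ⟨_, mk_mem_upperRegion hp (le_max_left p.2 (M + 1)), rfl⟩
  have := le_max_right p.2 (M + 1)
  linarith

lemma isCellOf_upperRegion (F : Finset (ℝ × ℝ)) : IsCellOf F (upperRegion F) := by
  obtain ⟨p, hp⟩ := upperRegion_nonempty F
  exact ⟨p, upperRegion_subset_compl_linesUnion F hp,
    (connectedComponentIn_compl_linesUnion hp).symm⟩

lemma mem_closure_upperRegion {F : Finset (ℝ × ℝ)} {l : ℝ × ℝ} {q : ℝ × ℝ}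
    (hq : q ∈ lineSet l) (habove : ∀ l' ∈ F, l' ≠ l → Above q l') :
    q ∈ closure (upperRegion F) := by
  have hlift : Filter.Tendsto (fun t : ℝ => (q.1, q.2 + t)) (nhdsWithin 0 (Set.Ioi 0)) (nhds q) :=
    (Continuous.tendsto' (by fun_prop) 0 q (by simp)).mono_left nhdsWithin_le_nhds
  refine mem_closure_of_tendsto hlift (eventually_nhdsWithin_of_forall fun t (ht : 0 < t) => ?_)
  intro l' hl'
  by_cases hl'l : l' = l
  · subst hl'l
    change q.2 = _ at hq
    show _ < _
    linarith
  · exact lt_add_of_lt_of_pos (habove l' hl' hl'l) ht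

lemma contributes_upperRegion {F : Finset (ℝ × ℝ)} {l : ℝ × ℝ}
    (htop : {x : ℝ | ∀ l' ∈ F, l' ≠ l → l'.1 * x + l'.2 < l.1 * x + l.2}.Nontrivial) :
    Contributes l (upperRegion F) := by
  obtain ⟨x₁, hx₁, x₂, hx₂, hne⟩ := htop
  have hmem : ∀ x ∈ {x : ℝ | ∀ l' ∈ F, l' ≠ l → l'.1 * x + l'.2 < l.1 * x + l.2},
      (x, l.1 * x + l.2) ∈ closure (upperRegion F) ∩ lineSet l :=
    fun x hx => ⟨mem_closure_upperRegion rfl hx, rfl⟩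
  exact ⟨_, _, fun h => hne (congrArg Prod.fst h), hmem x₁ hx₁, hmem x₂ hx₂⟩

lemma nontrivial_setOf_forall_lt_of_cup {N : ℕ} {a : Fin N → ℝ × ℝ}
    (hmono : StrictMono fun i => (a i).1)
    (hred : ∀ i j k : Fin N, i < j → j < k → Below (interPt (a i) (a k)) (a j)) (i : Fin N) :
    {x : ℝ | ∀ j ≠ i, (a j).1 * x + (a j).2 < (a i).1 * x + (a i).2}.Nontrivial := by
  classical
  set left := (Finset.univ.filter (· < i)).image fun j => (interPt (a j) (a i)).1
  set right := (Finset.univ.filter (i < ·)).image fun k => (interPt (a i) (a k)).1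
  have hsep : ∀ x ∈ left, ∀ y ∈ right, x < y := by
    simp only [left, right, Finset.forall_mem_image, Finset.mem_filter, Finset.mem_univ,
      true_and]
    intro j hj k hk
    -- The crossing of `a j` and `a k`, lying below `a i`, separates their crossings with `a i`.
    have hi := hred j i k hj hk
    have hk_top : (a k).1 * (interPt (a j) (a k)).1 + (a k).2 <
        (a i).1 * (interPt (a j) (a k)).1 + (a i).2 := by
      rwa [← interPt_mem_lineSet_right (hmono (hj.trans hk)).ne]
    exact ((lt_iff_interPt_fst_lt (hmono hj) _).1 hi).trans
      ((lt_iff_lt_interPt_fst (hmono hk) _).1 hk_top)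
  have hgood : ∀ x, (∀ y ∈ left, y < x) → (∀ y ∈ right, x < y) →
      ∀ j ≠ i, (a j).1 * x + (a j).2 < (a i).1 * x + (a i).2 := by
    intro x hleft hright j hji
    rcases hji.lt_or_gt with hj | hj
    · exact (lt_iff_interPt_fst_lt (hmono hj) x).2
        (hleft _ (Finset.mem_image_of_mem _ (by simpa using hj)))
    · exact (lt_iff_lt_interPt_fst (hmono hj) x).2
        (hright _ (Finset.mem_image_of_mem _ (by simpa using hj)))
  obtain ⟨x₁, hleft₁, hright₁⟩ := left.exists_between' right hsep
  obtain ⟨x₂, hleft₂, hright₂⟩ := (insert x₁ left).exists_between' right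
    (Finset.forall_mem_insert _ _ _ |>.2 ⟨hright₁, hsep⟩)
  exact ⟨x₁, hgood x₁ hleft₁ hright₁, x₂,
    hgood x₂ (fun y hy => hleft₂ y (Finset.mem_insert_of_mem hy)) hright₂,
    (hleft₂ x₁ (Finset.mem_insert_self _ _)).ne⟩

theorem stmt5_general (N : ℕ) (a : Fin N → ℝ × ℝ) (hmono : StrictMono fun i => (a i).1)
    (hred : ∀ i j k : Fin N, i < j → j < k → Below (interPt (a i) (a k)) (a j)) :
    ∃ P, IsNCell (Finset.univ.image a) P ∧ ¬ Bornology.IsBounded P := by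
  refine ⟨upperRegion _, ⟨isCellOf_upperRegion _, ?_⟩, not_isBounded_upperRegion _⟩
  simp only [Finset.forall_mem_image, Finset.mem_univ, forall_const]
  intro i
  refine contributes_upperRegion ((nontrivial_setOf_forall_lt_of_cup hmono hred i).mono ?_)
  intro x hx l hl hne
  obtain ⟨j, -, rfl⟩ := Finset.mem_image.1 hl
  exact hx j (ne_of_apply_ne a hne)

/-- If every triple (ordered by slope) has the intersection of its extreme lines
strictly below the middle line, then all N lines are in convex position, defining
an unbounded N-cell. -/
theorem stmt5 (N : ℕ) (a : Fin N → ℝ × ℝ) (hmono : StrictMono fun i => (a i).1)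
    (hgp : ∀ i j k : Fin N, i < j → j < k →
      ∀ p, ¬(p ∈ lineSet (a i) ∧ p ∈ lineSet (a j) ∧ p ∈ lineSet (a k)))
    (hred : ∀ i j k : Fin N, i < j → j < k → Below (interPt (a i) (a k)) (a j)) :
    ∃ P, IsNCell (Finset.univ.image a) P ∧ ¬ Bornology.IsBounded P :=
  stmt5_general N a hmono hred
end

section
/- Let lines a₁, …, a_n (n ≥ 3) be given with equations y = mᵢx + cᵢ and m₁ < m₂ < ⋯ < m_n. Then the region above all the lines, {(x,y) : y > mᵢx + cᵢ for all i}, has every line contributing a segment of positive length to its boundary if and only if for every 1 < i < n the line aᵢ lies strictly above the intersection point of a_{i-1} and a_{i+1}. -/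
open Set

/-!
The closure of the region is the closed epigraph of the upper envelope `max_j (mⱼ x + cⱼ)`, so a
line contributes a segment exactly when it realises the envelope at two distinct abscissae.
Let `xᵢ` be the abscissa of `aᵢ ∩ aᵢ₊₁`. Since slopes increase, `aᵢ` is above `aᵢ₋₁` exactly for
`x ≥ xᵢ₋₁` and above `aᵢ₊₁` exactly for `x ≤ xᵢ`, while `aᵢ` passes above `aᵢ₋₁ ∩ aᵢ₊₁` iff
`xᵢ₋₁ < xᵢ`. This gives necessity. Conversely, if the `xᵢ` increase, induction along the chain
shows that `aᵢ` dominates every line on `[xᵢ₋₁, xᵢ]`, an interval of positive length.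
-/

open Filter Topology

section TwoLines

variable {l₁ l₂ l₃ : ℝ × ℝ}

lemma interPt_snd_eq_right (h : l₁.1 ≠ l₂.1) :
    (interPt l₁ l₂).2 = l₂.1 * (interPt l₁ l₂).1 + l₂.2 := by
  have : l₁.1 - l₂.1 ≠ 0 := sub_ne_zero.2 h
  simp only [interPt]
  field_simp
  ring

lemma interPt_fst_le_iff (h : l₁.1 < l₂.1) (x : ℝ) :
    (interPt l₁ l₂).1 ≤ x ↔ l₁.1 * x + l₁.2 ≤ l₂.1 * x + l₂.2 := by
  rw [interPt, div_le_iff_of_neg (by linarith)]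
  constructor <;> intro <;> nlinarith

lemma interPt_fst_lt_iff (h : l₁.1 < l₂.1) (x : ℝ) :
    (interPt l₁ l₂).1 < x ↔ l₁.1 * x + l₁.2 < l₂.1 * x + l₂.2 := by
  rw [interPt, div_lt_iff_of_neg (by linarith)]
  constructor <;> intro <;> nlinarith

lemma le_interPt_fst_iff (h : l₁.1 < l₂.1) (x : ℝ) :
    x ≤ (interPt l₁ l₂).1 ↔ l₂.1 * x + l₂.2 ≤ l₁.1 * x + l₁.2 := by
  rw [← not_lt, interPt_fst_lt_iff h, not_lt]

lemma lt_interPt_fst_iff (h : l₁.1 < l₂.1) (x : ℝ) :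
    x < (interPt l₁ l₂).1 ↔ l₂.1 * x + l₂.2 < l₁.1 * x + l₁.2 := by
  rw [← not_le, interPt_fst_le_iff h, not_le]

/-- At the abscissa `x` of `l₁ ∩ l₃` both `l₁ < l₂` and `l₃ < l₂`, or both fail, so `l₂` is
above that point iff `l₁ ∩ l₂` lies left of `x` iff `l₂ ∩ l₃` lies right of `x`. -/
lemma below_interPt_iff (h₁₂ : l₁.1 < l₂.1) (h₂₃ : l₂.1 < l₃.1) :
    Below (interPt l₁ l₃) l₂ ↔ (interPt l₁ l₂).1 < (interPt l₂ l₃).1 := by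
  set x := (interPt l₁ l₃).1
  have h₁₃ : l₁.1 * x + l₁.2 = l₃.1 * x + l₃.2 := interPt_snd_eq_right (h₁₂.trans h₂₃).ne
  have hleft : Below (interPt l₁ l₃) l₂ ↔ (interPt l₁ l₂).1 < x := (interPt_fst_lt_iff h₁₂ x).symm
  have hright : Below (interPt l₁ l₃) l₂ ↔ x < (interPt l₂ l₃).1 := by
    rw [lt_interPt_fst_iff h₂₃, ← h₁₃]
    rfl
  constructor
  · intro h
    exact (hleft.1 h).trans (hright.1 h)
  · intro h
    by_contra hb
    have h₁ := not_lt.1 (mt hleft.2 hb)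
    have h₂ := not_lt.1 (mt hright.2 hb)
    linarith

lemma below_interPt_of_le_of_le (h₁₂ : l₁.1 < l₂.1) (h₂₃ : l₂.1 < l₃.1) {x y : ℝ} (hxy : x ≠ y)
    (hx₁ : l₁.1 * x + l₁.2 ≤ l₂.1 * x + l₂.2) (hx₃ : l₃.1 * x + l₃.2 ≤ l₂.1 * x + l₂.2)
    (hy₁ : l₁.1 * y + l₁.2 ≤ l₂.1 * y + l₂.2) (hy₃ : l₃.1 * y + l₃.2 ≤ l₂.1 * y + l₂.2) :
    Below (interPt l₁ l₃) l₂ := by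
  rw [below_interPt_iff h₁₂ h₂₃]
  rw [← interPt_fst_le_iff h₁₂] at hx₁ hy₁
  rw [← le_interPt_fst_iff h₂₃] at hx₃ hy₃
  rcases hxy.lt_or_gt with h | h <;> linarith

end TwoLines

def AttainsEnvelope {ι : Type*} (a : ι → ℝ × ℝ) (l : ℝ × ℝ) (x : ℝ) : Prop :=
  ∀ j, (a j).1 * x + (a j).2 ≤ l.1 * x + l.2

lemma closure_setOf_forall_lt_snd {ι : Type*} {f : ι → ℝ → ℝ} (hf : ∀ j, Continuous (f j)) :
    closure {p : ℝ × ℝ | ∀ j, f j p.1 < p.2} = {p : ℝ × ℝ | ∀ j, f j p.1 ≤ p.2} := by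
  apply (closure_minimal (fun p hp j => (hp j).le) _).antisymm
  · intro p hp
    have hlim : Tendsto (fun ε : ℝ => (p.1, p.2 + ε)) (𝓝[>] 0) (𝓝 p) :=
      tendsto_nhdsWithin_of_tendsto_nhds <| by
        simpa using tendsto_const_nhds.prodMk_nhds ((continuous_const_add p.2).tendsto 0)
    refine mem_closure_of_tendsto hlim ?_
    filter_upwards [self_mem_nhdsWithin] with ε hε j
    exact (hp j).trans_lt (lt_add_of_pos_right _ hε)
  · simp only [ofPred_forall]
    exact isClosed_iInter fun j => isClosed_le ((hf j).comp continuous_fst) continuous_snd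

lemma contributes_iff_exists_ne {ι : Type*} (a : ι → ℝ × ℝ) (l : ℝ × ℝ) :
    Contributes l {p : ℝ × ℝ | ∀ j, (a j).1 * p.1 + (a j).2 < p.2} ↔
      ∃ x y, x ≠ y ∧ AttainsEnvelope a l x ∧ AttainsEnvelope a l y := by
  rw [Contributes, closure_setOf_forall_lt_snd (f := fun j x => (a j).1 * x + (a j).2)
    (fun j => by fun_prop)]
  constructor
  · rintro ⟨p, q, hpq, ⟨hp, hpl⟩, ⟨hq, hql⟩⟩
    refine ⟨p.1, q.1, fun h => hpq (Prod.ext h ?_), ?_, ?_⟩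
    · rw [hpl, hql, h]
    · intro j; rw [← hpl]; exact hp j
    · intro j; rw [← hql]; exact hq j
  · rintro ⟨x, y, hxy, hx, hy⟩
    exact ⟨(x, l.1 * x + l.2), (y, l.1 * y + l.2), fun h => hxy (congrArg Prod.fst h),
      ⟨hx, rfl⟩, ⟨hy, rfl⟩⟩

namespace CupSequence

variable {a : ℕ → ℝ × ℝ} {n : ℕ}
  (hslope : ∀ k, k + 1 < n → (a k).1 < (a (k + 1)).1)
  (hcup : ∀ k, k + 2 < n → (interPt (a k) (a (k + 1))).1 < (interPt (a (k + 1)) (a (k + 2))).1)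
include hslope hcup

lemma le_of_interPt_fst_le {j m : ℕ} (hjm : j ≤ m) (hm : m + 1 < n) {x : ℝ}
    (hx : (interPt (a m) (a (m + 1))).1 ≤ x) :
    (a j).1 * x + (a j).2 ≤ (a (m + 1)).1 * x + (a (m + 1)).2 := by
  induction m, hjm using Nat.le_induction with
  | base => exact (interPt_fst_le_iff (hslope j hm) x).1 hx
  | succ m _ ih =>
    have hprev := ih (by omega) ((hcup m hm).le.trans hx)
    have hnext := (interPt_fst_le_iff (hslope (m + 1) hm) x).1 hx
    exact hprev.trans hnext

lemma le_of_le_interPt_fst {i m : ℕ} (him : i ≤ m) (hm : m + 1 < n) {x : ℝ}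
    (hx : x ≤ (interPt (a i) (a (i + 1))).1) :
    (a (m + 1)).1 * x + (a (m + 1)).2 ≤ (a i).1 * x + (a i).2 := by
  induction him using Nat.decreasingInduction with
  | self => exact (le_interPt_fst_iff (hslope m hm) x).1 hx
  | of_succ i hi ih =>
    have hprev := ih (hx.trans (hcup i (by omega)).le)
    have hnext := (le_interPt_fst_iff (hslope i (by omega)) x).1 hx
    exact hprev.trans hnext

lemma attainsEnvelope_of_mem {i : ℕ} (hi : i < n) {x : ℝ}
    (hleft : 0 < i → (interPt (a (i - 1)) (a i)).1 ≤ x)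
    (hright : i + 1 < n → x ≤ (interPt (a i) (a (i + 1))).1) :
    AttainsEnvelope (fun j : Fin n => a j) (a i) x := by
  rintro ⟨j, hj⟩
  change (a j).1 * x + (a j).2 ≤ _
  rcases lt_trichotomy j i with hji | rfl | hij
  · obtain ⟨m, rfl⟩ : ∃ m, i = m + 1 := ⟨i - 1, by omega⟩
    exact le_of_interPt_fst_le hslope hcup (by omega) hi (hleft (by omega))
  · exact le_rfl
  · obtain ⟨m, rfl⟩ : ∃ m, j = m + 1 := ⟨j - 1, by omega⟩
    exact le_of_le_interPt_fst hslope hcup (by omega) hj (hright (by omega))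

lemma exists_ne_attainsEnvelope {i : ℕ} (hi : i < n) :
    ∃ x y, x ≠ y ∧ AttainsEnvelope (fun j : Fin n => a j) (a i) x ∧
      AttainsEnvelope (fun j : Fin n => a j) (a i) y := by
  obtain ⟨x, y, hxy, hx, hy⟩ : ∃ x y : ℝ, x < y ∧ (0 < i → (interPt (a (i - 1)) (a i)).1 ≤ x) ∧
      (i + 1 < n → y ≤ (interPt (a i) (a (i + 1))).1) := by
    by_cases hi₀ : 0 < i <;> by_cases hin : i + 1 < n
    · obtain ⟨k, rfl⟩ : ∃ k, i = k + 1 := ⟨i - 1, by omega⟩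
      exact ⟨_, _, hcup k hin, fun _ => le_rfl, fun _ => le_rfl⟩
    · exact ⟨_, _, lt_add_one _, fun _ => le_rfl, fun h => absurd h hin⟩
    · exact ⟨_, _, sub_one_lt _, fun h => absurd h hi₀, fun _ => le_rfl⟩
    · exact ⟨0, 1, one_pos, fun h => absurd h hi₀, fun h => absurd h hin⟩
  exact ⟨x, y, hxy.ne,
    attainsEnvelope_of_mem hslope hcup hi hx fun h => hxy.le.trans (hy h),
    attainsEnvelope_of_mem hslope hcup hi (fun h => (hx h).trans hxy.le) hy⟩

end CupSequence

/-- The region above all n ≥ 3 lines has every line contributing a boundary segment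
iff every intermediate line lies strictly above the intersection of its neighbours. -/
theorem stmt6 (n : ℕ) (a : Fin n → ℝ × ℝ)
    (hmono : StrictMono fun i => (a i).1) :
    (∀ i : Fin n,
        Contributes (a i) {p : ℝ × ℝ | ∀ j : Fin n, (a j).1 * p.1 + (a j).2 < p.2}) ↔
      (∀ i : Fin n, ∀ _h1 : 0 < (i : ℕ), ∀ h2 : (i : ℕ) + 1 < n,
        Below (interPt (a ⟨(i : ℕ) - 1, by omega⟩) (a ⟨(i : ℕ) + 1, h2⟩)) (a i)) := by
  simp only [contributes_iff_exists_ne]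
  constructor
  · intro htop i hi₀ hi
    obtain ⟨x, y, hxy, hx, hy⟩ := htop i
    exact below_interPt_of_le_of_le (hmono (Fin.lt_def.2 (Nat.sub_one_lt hi₀.ne')))
      (hmono (Fin.lt_def.2 (Nat.lt_add_one _))) hxy (hx _) (hx _) (hy _) (hy _)
  · intro hcup i
    let A : ℕ → ℝ × ℝ := fun k => if h : k < n then a ⟨k, h⟩ else 0
    have hA : ∀ k (h : k < n), A k = a ⟨k, h⟩ := fun k h => dif_pos h
    have hslope : ∀ k, k + 1 < n → (A k).1 < (A (k + 1)).1 := fun k hk => by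
      rw [hA k (by omega), hA (k + 1) hk]
      exact hmono (Fin.mk_lt_mk.2 (by omega))
    have hcupA : ∀ k, k + 2 < n →
        (interPt (A k) (A (k + 1))).1 < (interPt (A (k + 1)) (A (k + 2))).1 := fun k hk => by
      rw [hA k (by omega), hA (k + 1) (by omega), hA (k + 2) hk, ← below_interPt_iff
        (hmono (Fin.mk_lt_mk.2 (by omega))) (hmono (Fin.mk_lt_mk.2 (by omega)))]
      exact hcup ⟨k + 1, by omega⟩ k.succ_pos (by omega)
    have hAa : (fun j : Fin n => A j) = a := funext fun j => hA j j.isLt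
    simpa [hAa, hA i i.isLt] using CupSequence.exists_ne_attainsEnvelope hslope hcupA i.isLt
end

section
/- Let f(k, l) denote the smallest number N such that every family of N lines in general position contains either k lines forming a k-cup or l lines forming an l-cap. Then f(k, l) = C(k + l - 4, k - 2) + 1 for all k, l ≥ 2. -/
open Set

/-!
A line `y = m x + c` is treated as the dual point `(m, c)`, and `orient p q r` is the
orientation of three such points: ordered by slope, `k` lines form a cup (cap) exactly when
every consecutive triple is oriented clockwise (counterclockwise).

For the upper bound only this dichotomy of triples matters. Let `T` be the set of right ends
of `(k-1)`-cups. Outside `T` there is no `(k-1)`-cup, so by induction it holds an `l`-cap as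
soon as it has more than `C(k+l-5, k-3)` lines; otherwise `T` has more than `C(k+l-5, k-2)`
lines, hence a `k`-cup or an `(l-1)`-cap whose first line ends a `(k-1)`-cup, and the triple
where the two meet extends one of them. Pascal's rule adds the two counts up.

The bound is attained by induction as well: an extremal `(k, l-1)` family together with a
translate of an extremal `(k-1, l)` family placed far to the right and high above it.
-/

section Chain

variable {α β : Type*} [Preorder β] {f : α → β} {R : α → α → α → Prop}

variable (f R) in
def IsTurnChain {k : ℕ} (a : Fin k → α) : Prop :=
  StrictMono (f ∘ a) ∧
    ∀ i (h : i + 2 < k), R (a ⟨i, by omega⟩) (a ⟨i + 1, by omega⟩) (a ⟨i + 2, h⟩)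

variable (f R) in
def HasTurnChain (k : ℕ) (F : Finset α) : Prop :=
  ∃ a : Fin k → α, (∀ i, a i ∈ F) ∧ IsTurnChain f R a

theorem IsTurnChain.tail {n : ℕ} {a : Fin (n + 1) → α} (h : IsTurnChain f R a) :
    IsTurnChain f R (Fin.tail a) :=
  ⟨h.1.comp Fin.strictMono_succ, fun i hi => h.2 (i + 1) (by omega)⟩

theorem IsTurnChain.snoc {n : ℕ} {a : Fin (n + 2) → α} (h : IsTurnChain f R a) {x : α}
    (hx : f (a (Fin.last _)) < f x) (hR : R (a ⟨n, by omega⟩) (a (Fin.last _)) x) :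
    IsTurnChain f R (Fin.snoc a x : Fin (n + 3) → α) := by
  refine ⟨Fin.strictMono_iff_lt_succ.2 fun i => ?_, fun i hi => ?_⟩
  · induction i using Fin.lastCases with
    | last => simpa using hx
    | cast j =>
      simp only [Function.comp_apply, Fin.succ_castSucc, Fin.snoc_castSucc]
      exact h.1 j.castSucc_lt_succ
  · rcases (show i + 2 < n + 2 ∨ i = n by omega) with hi' | rfl
    · simpa [Fin.snoc, hi', show i < n + 2 by omega, show i + 1 < n + 2 by omega] using h.2 i hi'
    · simpa [Fin.snoc, Fin.last] using hR

theorem IsTurnChain.comp_rev_iff {k : ℕ} {a : Fin k → α} :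
    IsTurnChain (OrderDual.toDual ∘ f) (fun x y z => R z y x) (a ∘ Fin.rev) ↔
      IsTurnChain f R a := by
  refine and_congr ?_ ⟨fun H i hi => ?_, fun H i hi => ?_⟩
  · change StrictMono (OrderDual.toDual ∘ (f ∘ a ∘ Fin.rev)) ↔ _
    rw [strictMono_toDual_comp_iff]
    exact ⟨fun h => by simpa [Function.comp_def] using h.comp Fin.rev_strictAnti,
      fun h => h.comp_strictAnti Fin.rev_strictAnti⟩
  · convert H (k - 3 - i) (by omega) using 2 <;> simp only [Function.comp_apply] <;>
      congr 1 <;> ext <;> simp <;> omega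
  · convert H (k - 3 - i) (by omega) using 2 <;> simp only [Function.comp_apply] <;>
      congr 1 <;> ext <;> simp <;> omega

theorem IsTurnChain.cons {n : ℕ} {a : Fin (n + 2) → α} (h : IsTurnChain f R a) {x : α}
    (hx : f x < f (a 0)) (hR : R x (a 0) (a 1)) :
    IsTurnChain f R (Fin.cons x a : Fin (n + 3) → α) := by
  rw [← IsTurnChain.comp_rev_iff, Fin.cons_comp_rev]
  refine (IsTurnChain.comp_rev_iff.2 h).snoc (by simpa using hx) ?_
  convert hR using 2 <;> simp only [Function.comp_apply] <;> congr 1 <;> ext <;> simp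

theorem IsTurnChain.snoc_or_cons {S : α → α → α → Prop} {k l : ℕ} {G : Finset α}
    {c : Fin (k + 2) → α} {b : Fin (l + 2) → α} (hc : IsTurnChain f R c) (hb : IsTurnChain f S b)
    (hcG : ∀ i, c i ∈ G) (hbG : ∀ i, b i ∈ G) (hcb : c (Fin.last _) = b 0)
    (hRS : ∀ x ∈ G, ∀ y ∈ G, ∀ z ∈ G, f x < f y → f y < f z → R x y z ∨ S x y z) :
    HasTurnChain f R (k + 3) G ∨ HasTurnChain f S (l + 3) G := by
  have hcb₀ : f (c ⟨k, by omega⟩) < f (b 0) := hcb ▸ hc.1 (Fin.mk_lt_mk.2 (by simp))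
  have hb₀₁ : f (b 0) < f (b 1) := hb.1 (by simp)
  rcases hRS _ (hcG _) _ (hbG 0) _ (hbG 1) hcb₀ hb₀₁ with hR | hS
  · refine .inl ⟨Fin.snoc c (b 1), fun i => ?_, hc.snoc (hcb ▸ hb₀₁) (hcb ▸ hR)⟩
    induction i using Fin.lastCases <;> simp [hcG, hbG]
  · refine .inr ⟨Fin.cons (c ⟨k, by omega⟩) b, fun i => ?_, hb.cons hcb₀ hS⟩
    induction i using Fin.cases <;> simp [hcG, hbG]

theorem HasTurnChain.map {k : ℕ} {F G : Finset α} (g : α → α)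
    (hf : ∀ x y, f x < f y → f (g x) < f (g y)) (hR : ∀ x y z, R x y z → R (g x) (g y) (g z))
    (hg : ∀ x ∈ F, g x ∈ G) : HasTurnChain f R k F → HasTurnChain f R k G :=
  fun ⟨a, haF, hmono, hturn⟩ =>
    ⟨g ∘ a, fun i => hg _ (haF i), fun _ _ hij => hf _ _ (hmono hij),
      fun i hi => hR _ _ _ (hturn i hi)⟩

theorem HasTurnChain.mono {k : ℕ} {F G : Finset α} (hFG : F ⊆ G) :
    HasTurnChain f R k F → HasTurnChain f R k G :=
  HasTurnChain.map id (fun _ _ => id) (fun _ _ _ => id) fun _ hx => hFG hx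

theorem HasTurnChain.card_le {k : ℕ} {F : Finset α} : HasTurnChain f R k F → k ≤ F.card :=
  fun ⟨a, haF, hmono, _⟩ => by
    simpa using Finset.card_le_card_of_injOn (s := .univ) a (fun i _ => haF i)
      hmono.injective.of_comp.injOn

theorem hasTurnChain_comp_rev_iff {k : ℕ} {F : Finset α} :
    HasTurnChain (OrderDual.toDual ∘ f) (fun x y z => R z y x) k F ↔ HasTurnChain f R k F := by
  refine ⟨fun ⟨b, hbF, hb⟩ => ⟨b ∘ Fin.rev, fun i => hbF _, ?_⟩,
    fun ⟨a, haF, ha⟩ => ⟨a ∘ Fin.rev, fun i => haF _, IsTurnChain.comp_rev_iff.2 ha⟩⟩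
  rw [← IsTurnChain.comp_rev_iff]
  simpa [Function.comp_def] using hb

theorem not_hasTurnChain_union {n : ℕ} {X Y : Finset α} [DecidableEq α]
    (hXY : ∀ x ∈ X, ∀ y ∈ Y, f x < f y)
    (hR : ∀ p ∈ X, ∀ q ∈ X, ∀ r ∈ Y, f p < f q → ¬ R p q r)
    (hX : ¬ HasTurnChain f R (n + 2) X) (hY : ¬ HasTurnChain f R (n + 1) Y) :
    ¬ HasTurnChain f R (n + 2) (X ∪ Y) := by
  rintro ⟨a, haXY, ha⟩
  by_cases h1 : a 1 ∈ Y
  · refine hY ⟨Fin.tail a, fun i => ?_, ha.tail⟩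
    refine (Finset.mem_union.1 (haXY i.succ)).resolve_left fun hX => ?_
    exact (hXY _ hX _ h1).not_ge (ha.1.monotone (Fin.succ_pos i))
  have h1X : a 1 ∈ X := (Finset.mem_union.1 (haXY 1)).resolve_right h1
  have h0X : a 0 ∈ X := by
    refine (Finset.mem_union.1 (haXY 0)).resolve_right fun h0 => ?_
    exact (hXY _ h1X _ h0).not_ge (ha.1.monotone (Fin.zero_le 1))
  suffices ∀ i (hi : i < n + 2), a ⟨i, hi⟩ ∈ X from hX ⟨a, fun i => this i i.2, ha⟩
  intro i
  induction i using Nat.twoStepInduction with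
  | zero => exact fun _ => h0X
  | one => exact fun _ => h1X
  | more i ih₀ ih₁ =>
    intro hi
    refine (Finset.mem_union.1 (haXY _)).resolve_right fun hY => ?_
    exact hR _ (ih₀ (by omega)) _ (ih₁ (by omega)) _ hY
      (ha.1 (Fin.mk_lt_mk.2 (by omega))) (ha.2 i hi)

theorem not_hasTurnChain_union' {n : ℕ} {X Y : Finset α} [DecidableEq α]
    (hXY : ∀ x ∈ X, ∀ y ∈ Y, f x < f y)
    (hR : ∀ p ∈ X, ∀ q ∈ Y, ∀ r ∈ Y, f q < f r → ¬ R p q r)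
    (hX : ¬ HasTurnChain f R (n + 1) X) (hY : ¬ HasTurnChain f R (n + 2) Y) :
    ¬ HasTurnChain f R (n + 2) (X ∪ Y) := by
  simp only [← hasTurnChain_comp_rev_iff (f := f), Finset.union_comm X] at hX hY ⊢
  exact not_hasTurnChain_union (fun y hy x hx => hXY x hx y hy)
    (fun r hr q hq p hp hrq => hR p hp q hq r hr hrq) hY hX

end Chain

section UpperBound

variable {α β : Type*} [LinearOrder β] {f : α → β} {R S : α → α → α → Prop} {F : Finset α}

theorem hasTurnChain_two (hf : Set.InjOn f F) (hF : 1 < F.card) : HasTurnChain f R 2 F := by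
  obtain ⟨x, hx, y, hy, hxy⟩ := Finset.one_lt_card.1 hF
  wlog hlt : f x < f y generalizing x y
  · exact this y hy x hx hxy.symm (((hf.ne_iff hx hy).2 hxy).lt_or_gt.resolve_left hlt)
  refine ⟨![x, y], fun i => by fin_cases i <;> assumption, ?_, fun i hi => by omega⟩
  exact Fin.strictMono_iff_lt_succ.2 fun i => by fin_cases i; exact hlt

theorem hasTurnChain_or_hasTurnChain_of_choose_lt_card (hf : Set.InjOn f F)
    (hRS : ∀ x ∈ F, ∀ y ∈ F, ∀ z ∈ F, f x < f y → f y < f z → R x y z ∨ S x y z) :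
    ∀ k l : ℕ, ∀ G ⊆ F, (k + l).choose k < G.card →
      HasTurnChain f R (k + 2) G ∨ HasTurnChain f S (l + 2) G
  | 0, _, G, hG, hcard => .inl (hasTurnChain_two (hf.mono hG) (by simpa using hcard))
  | k + 1, 0, G, hG, hcard => .inr (hasTurnChain_two (hf.mono hG) (by simpa using hcard))
  | k + 1, l + 1, G, hG, hcard => by
    classical
    let T := G.filter fun x =>
      ∃ c : Fin (k + 2) → α, (∀ i, c i ∈ G) ∧ IsTurnChain f R c ∧ c (Fin.last _) = x
    have hTG : T ⊆ G := Finset.filter_subset _ G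
    have hsplit : (k + (l + 1)).choose k < (G \ T).card ∨ (k + 1 + l).choose (k + 1) < T.card := by
      have := Finset.card_sdiff_add_card_eq_card hTG
      have := Nat.choose_succ_succ' (k + l + 1) k
      rw [show k + 1 + (l + 1) = k + l + 1 + 1 by ring] at hcard
      rw [show k + (l + 1) = k + l + 1 by ring, show k + 1 + l = k + l + 1 by ring]
      omega
    rcases hsplit with hcard' | hcard'
    · rcases hasTurnChain_or_hasTurnChain_of_choose_lt_card hf hRS k (l + 1) (G \ T)
        (Finset.sdiff_subset.trans hG) hcard' with ⟨c, hcGT, hc⟩ | h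
      · have hcG i : c i ∈ G := (Finset.mem_sdiff.1 (hcGT i)).1
        exact absurd (Finset.mem_filter.2 ⟨hcG _, c, hcG, hc, rfl⟩)
          (Finset.mem_sdiff.1 (hcGT (Fin.last _))).2
      · exact .inr (h.mono Finset.sdiff_subset)
    · rcases hasTurnChain_or_hasTurnChain_of_choose_lt_card hf hRS (k + 1) l T (hTG.trans hG) hcard'
        with h | ⟨b, hbT, hb⟩
      · exact .inl (h.mono hTG)
      · obtain ⟨-, c, hcG, hc, hcb⟩ := Finset.mem_filter.1 (hbT 0)
        exact hc.snoc_or_cons hb hcG (fun i => hTG (hbT i)) hcb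
          fun x hx y hy z hz => hRS x (hG hx) y (hG hy) z (hG hz)

end UpperBound

theorem forall_middle_index_iff {α : Type*} {k : ℕ} (P : α → α → α → Prop) {a : Fin k → α} :
    (∀ i : Fin k, ∀ _ : 0 < (i : ℕ), ∀ h : (i : ℕ) + 1 < k,
        P (a ⟨i - 1, by omega⟩) (a i) (a ⟨i + 1, h⟩)) ↔
      ∀ i (h : i + 2 < k), P (a ⟨i, by omega⟩) (a ⟨i + 1, by omega⟩) (a ⟨i + 2, h⟩) := by
  refine ⟨fun H i h => H ⟨i + 1, by omega⟩ (Nat.succ_pos i) h, ?_⟩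
  rintro H ⟨_ | i, hi⟩ h0 h
  · exact absurd h0 (lt_irrefl 0)
  · exact H i h

noncomputable def orient (p q r : ℝ × ℝ) : ℝ :=
  (q.1 - p.1) * (r.2 - p.2) - (q.2 - p.2) * (r.1 - p.1)

theorem orient_add_right (p q r v : ℝ × ℝ) : orient (p + v) (q + v) (r + v) = orient p q r := by
  simp only [orient, Prod.fst_add, Prod.snd_add]
  ring

theorem orient_eq_mul_sub {p q : ℝ × ℝ} (h : p.1 ≠ q.1) (r : ℝ × ℝ) :
    orient p q r = (q.1 - p.1) * (r.1 * (interPt p q).1 + r.2 - (interPt p q).2) := by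
  have : p.1 - q.1 ≠ 0 := sub_ne_zero.2 h
  simp only [orient, interPt]
  field_simp
  ring

theorem orient_eq_zero_of_mem_lineSet {x p q r : ℝ × ℝ} (hp : x ∈ lineSet p) (hq : x ∈ lineSet q)
    (hr : x ∈ lineSet r) : orient p q r = 0 := by
  simp only [lineSet, mem_ofPred_eq] at hp hq hr
  simp only [orient]
  linear_combination (q.1 - r.1) * hp + (r.1 - p.1) * hq + (p.1 - q.1) * hr

theorem exists_mem_lineSet_of_orient_eq_zero {p q r : ℝ × ℝ} (h : p.1 ≠ q.1)
    (h0 : orient p q r = 0) : ∃ x, x ∈ lineSet p ∧ x ∈ lineSet q ∧ x ∈ lineSet r := by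
  have : p.1 - q.1 ≠ 0 := sub_ne_zero.2 h
  refine ⟨interPt p q, rfl, ?_, ?_⟩
  · simp only [lineSet, interPt, mem_ofPred_eq]
    field_simp
    ring
  · rw [orient_eq_mul_sub h, mul_eq_zero, sub_eq_zero, sub_eq_zero] at h0
    exact (h0.resolve_left (Ne.symm h)).symm

theorem below_interPt_iff_s7 {p r : ℝ × ℝ} (h : p.1 < r.1) (q : ℝ × ℝ) :
    Below (interPt p r) q ↔ orient p q r < 0 := by
  rw [Below, ← sub_pos, show orient p q r = -orient p r q by simp only [orient]; ring,
    orient_eq_mul_sub h.ne, neg_neg_iff_pos, mul_pos_iff_of_pos_left (sub_pos.2 h)]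

theorem above_interPt_iff {p r : ℝ × ℝ} (h : p.1 < r.1) (q : ℝ × ℝ) :
    Above (interPt p r) q ↔ 0 < orient p q r := by
  rw [Above, gt_iff_lt, ← sub_neg, show orient p q r = -orient p r q by simp only [orient]; ring,
    orient_eq_mul_sub h.ne, neg_pos]
  exact (smul_neg_iff_of_pos_left (sub_pos.2 h)).symm

theorem isCup_iff {k : ℕ} {a : Fin k → ℝ × ℝ} :
    IsCup a ↔ IsTurnChain Prod.fst (orient · · · < 0) a :=
  and_congr_right fun hmono => (forall_middle_index_iff fun p q r => Below (interPt p r) q).trans <|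
    forall₂_congr fun _ _ => below_interPt_iff_s7 (hmono (Fin.mk_lt_mk.2 (by omega))) _

theorem isCap_iff {k : ℕ} {a : Fin k → ℝ × ℝ} :
    IsCap a ↔ IsTurnChain Prod.fst (0 < orient · · ·) a :=
  and_congr_right fun hmono => (forall_middle_index_iff fun p q r => Above (interPt p r) q).trans <|
    forall₂_congr fun _ _ => above_interPt_iff (hmono (Fin.mk_lt_mk.2 (by omega))) _

theorem hasCup_iff {k : ℕ} {F : Finset (ℝ × ℝ)} :
    HasCup k F ↔ HasTurnChain Prod.fst (orient · · · < 0) k F :=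
  exists_congr fun _ => and_congr_right fun _ => isCup_iff

theorem hasCap_iff {k : ℕ} {F : Finset (ℝ × ℝ)} :
    HasCap k F ↔ HasTurnChain Prod.fst (0 < orient · · ·) k F :=
  exists_congr fun _ => and_congr_right fun _ => isCap_iff

theorem genPos_iff {F : Finset (ℝ × ℝ)} :
    GenPos F ↔ Set.InjOn Prod.fst (F : Set (ℝ × ℝ)) ∧
      ∀ p ∈ F, ∀ q ∈ F, ∀ r ∈ F, p.1 < q.1 → q.1 < r.1 → orient p q r ≠ 0 := by
  refine ⟨fun ⟨hslope, hconc⟩ => ⟨fun p hp q hq => not_imp_not.1 (hslope p hp q hq), ?_⟩,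
    fun ⟨hinj, horient⟩ => ⟨fun p hp q hq => (hinj.ne_iff hp hq).2, ?_⟩⟩
  · intro p hp q hq r hr hpq hqr h0
    refine hconc p hp q hq r hr ?_ ?_ ?_ (exists_mem_lineSet_of_orient_eq_zero hpq.ne h0) <;>
      rintro rfl <;> order
  · rintro l₁ h₁ l₂ h₂ l₃ h₃ h₁₂ h₁₃ h₂₃ ⟨x, hx₁, hx₂, hx₃⟩
    have sorted : ∀ p ∈ F, ∀ q ∈ F, ∀ r ∈ F, x ∈ lineSet p → x ∈ lineSet q → x ∈ lineSet r →
        p.1 < q.1 → ¬ q.1 < r.1 := fun p hp q hq r hr xp xq xr hpq hqr =>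
      horient p hp q hq r hr hpq hqr (orient_eq_zero_of_mem_lineSet xp xq xr)
    rcases ((hinj.ne_iff h₁ h₂).2 h₁₂).lt_or_gt with a | a <;>
      rcases ((hinj.ne_iff h₁ h₃).2 h₁₃).lt_or_gt with b | b <;>
      rcases ((hinj.ne_iff h₂ h₃).2 h₂₃).lt_or_gt with c | c
    · exact sorted _ h₁ _ h₂ _ h₃ hx₁ hx₂ hx₃ a c
    · exact sorted _ h₁ _ h₃ _ h₂ hx₁ hx₃ hx₂ b c
    · order
    · exact sorted _ h₃ _ h₁ _ h₂ hx₃ hx₁ hx₂ b a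
    · exact sorted _ h₂ _ h₁ _ h₃ hx₂ hx₁ hx₃ a b
    · order
    · exact sorted _ h₂ _ h₃ _ h₁ hx₂ hx₃ hx₁ c b
    · exact sorted _ h₃ _ h₂ _ h₁ hx₃ hx₂ hx₁ c a

theorem GenPos.image_add {F : Finset (ℝ × ℝ)} (hF : GenPos F) (v : ℝ × ℝ) :
    GenPos (F.image (· + v)) := by
  obtain ⟨hinj, horient⟩ := genPos_iff.1 hF
  refine genPos_iff.2 ⟨?_, ?_⟩
  · rw [Finset.coe_image]
    rintro _ ⟨p, hp, rfl⟩ _ ⟨q, hq, rfl⟩ h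
    exact congrArg (· + v) (hinj hp hq (by simpa using h))
  · simp only [Finset.mem_image]
    rintro _ ⟨p, hp, rfl⟩ _ ⟨q, hq, rfl⟩ _ ⟨r, hr, rfl⟩ hpq hqr
    rw [orient_add_right]
    exact horient p hp q hq r hr (by simpa using hpq) (by simpa using hqr)

theorem HasCup.of_image_add {k : ℕ} {F : Finset (ℝ × ℝ)} {v : ℝ × ℝ}
    (h : HasCup k (F.image (· + v))) : HasCup k F := by
  rw [hasCup_iff] at h ⊢
  refine h.map (· + -v) (fun x y hxy => by simpa using hxy)
    (fun x y z hxyz => by rwa [orient_add_right]) fun x hx => ?_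
  obtain ⟨y, hy, rfl⟩ := Finset.mem_image.1 hx
  simpa using hy

theorem HasCap.of_image_add {k : ℕ} {F : Finset (ℝ × ℝ)} {v : ℝ × ℝ}
    (h : HasCap k (F.image (· + v))) : HasCap k F := by
  rw [hasCap_iff] at h ⊢
  refine h.map (· + -v) (fun x y hxy => by simpa using hxy)
    (fun x y z hxyz => by rwa [orient_add_right]) fun x hx => ?_
  obtain ⟨y, hy, rfl⟩ := Finset.mem_image.1 hx
  simpa using hy

/-- In the dual plane: `X` lies to the left of `Y`, `Y` above every line through two points
of `X`, and `X` below every line through two points of `Y`. -/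
structure IsLowerLeftOf (X Y : Finset (ℝ × ℝ)) : Prop where
  fst_lt : ∀ p ∈ X, ∀ q ∈ Y, p.1 < q.1
  orient_pos : ∀ p ∈ X, ∀ q ∈ X, ∀ r ∈ Y, p.1 < q.1 → 0 < orient p q r
  orient_neg : ∀ p ∈ X, ∀ q ∈ Y, ∀ r ∈ Y, q.1 < r.1 → orient p q r < 0

namespace IsLowerLeftOf

variable {X Y : Finset (ℝ × ℝ)}

theorem disjoint (h : IsLowerLeftOf X Y) : Disjoint X Y :=
  Finset.disjoint_left.2 fun _ hpX hpY => lt_irrefl _ (h.fst_lt _ hpX _ hpY)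

theorem genPos_union (h : IsLowerLeftOf X Y) (hX : GenPos X) (hY : GenPos Y) : GenPos (X ∪ Y) := by
  obtain ⟨hXinj, hX⟩ := genPos_iff.1 hX
  obtain ⟨hYinj, hY⟩ := genPos_iff.1 hY
  refine genPos_iff.2 ⟨?_, ?_⟩
  · rw [Finset.coe_union, Set.injOn_union (Finset.disjoint_coe.2 h.disjoint)]
    exact ⟨hXinj, hYinj, fun p hp q hq => (h.fst_lt p hp q hq).ne⟩
  intro p hp q hq r hr hpq hqr
  rcases Finset.mem_union.1 hp with hp | hp <;> rcases Finset.mem_union.1 hq with hq | hq <;>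
    rcases Finset.mem_union.1 hr with hr | hr
  · exact hX p hp q hq r hr hpq hqr
  · exact (h.orient_pos p hp q hq r hr hpq).ne'
  · exact absurd (h.fst_lt r hr q hq) hqr.not_gt
  · exact (h.orient_neg p hp q hq r hr hqr).ne
  · exact absurd (h.fst_lt q hq p hp) hpq.not_gt
  · exact absurd (h.fst_lt q hq p hp) hpq.not_gt
  · exact absurd (h.fst_lt r hr q hq) hqr.not_gt
  · exact hY p hp q hq r hr hpq hqr

theorem not_hasCup_union {n : ℕ} (h : IsLowerLeftOf X Y) (hX : ¬ HasCup (n + 2) X)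
    (hY : ¬ HasCup (n + 1) Y) : ¬ HasCup (n + 2) (X ∪ Y) := by
  rw [hasCup_iff] at *
  exact not_hasTurnChain_union h.fst_lt
    (fun p hp q hq r hr hpq => (h.orient_pos p hp q hq r hr hpq).not_gt) hX hY

theorem not_hasCap_union {n : ℕ} (h : IsLowerLeftOf X Y) (hX : ¬ HasCap (n + 1) X)
    (hY : ¬ HasCap (n + 2) Y) : ¬ HasCap (n + 2) (X ∪ Y) := by
  rw [hasCap_iff] at *
  exact not_hasTurnChain_union' h.fst_lt
    (fun p hp q hq r hr hqr => (h.orient_neg p hp q hq r hr hqr).not_gt) hX hY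

end IsLowerLeftOf

open Filter in
theorem exists_isLowerLeftOf_image_add (X Y : Finset (ℝ × ℝ)) :
    ∃ v : ℝ × ℝ, IsLowerLeftOf X (Y.image (· + v)) := by
  have eventually_pos {a : ℝ} (ha : 0 < a) (b : ℝ) : ∀ᶠ t in atTop, 0 < a * t + b :=
    (tendsto_atTop_add_const_right _ b (tendsto_id.const_mul_atTop ha)).eventually_gt_atTop 0
  obtain ⟨s, hs⟩ : ∃ s : ℝ, ∀ p ∈ X, ∀ q ∈ Y, p.1 < q.1 + s := by
    simp only [← sub_lt_iff_lt_add']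
    exact ((eventually_all_finset X).2 fun p _ => (eventually_all_finset Y).2 fun q _ =>
      eventually_gt_atTop (p.1 - q.1)).exists
  -- Both orientations are affine in the vertical shift `H`, with slopes of the right sign.
  have hpos (p q r : ℝ × ℝ) (hpq : p.1 < q.1) : ∀ᶠ H in atTop, 0 < orient p q (r + (s, H)) := by
    refine (eventually_pos (sub_pos.2 hpq) (orient p q r - (q.2 - p.2) * s)).mono fun H hH => ?_
    simp only [orient, Prod.fst_add, Prod.snd_add] at hH ⊢
    linear_combination hH
  have hneg (p q r : ℝ × ℝ) (hqr : q.1 < r.1) :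
      ∀ᶠ H in atTop, orient p (q + (s, H)) (r + (s, H)) < 0 := by
    refine (eventually_pos (sub_pos.2 hqr) (-orient p (q + (s, 0)) (r + (s, 0)))).mono
      fun H hH => ?_
    simp only [orient, Prod.fst_add, Prod.snd_add] at hH ⊢
    linear_combination hH
  obtain ⟨H, hposH, hnegH⟩ : ∃ H : ℝ,
      (∀ p ∈ X, ∀ q ∈ X, ∀ r ∈ Y, p.1 < q.1 → 0 < orient p q (r + (s, H))) ∧
      ∀ p ∈ X, ∀ q ∈ Y, ∀ r ∈ Y, q.1 < r.1 → orient p (q + (s, H)) (r + (s, H)) < 0 := by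
    refine Eventually.exists (f := atTop) ?_
    simp only [eventually_and, eventually_all_finset, eventually_imp_distrib_left]
    exact ⟨fun p _ q _ r _ => hpos p q r, fun p _ q _ r _ => hneg p q r⟩
  refine ⟨(s, H), ⟨?_, ?_, ?_⟩⟩ <;> simp only [Finset.forall_mem_image]
  · exact hs
  · exact hposH
  · exact fun p hp q hq r hr hqr => hnegH p hp q hq r hr (by simpa using hqr)

theorem hasCup_or_hasCap_of_choose_lt_card {F : Finset (ℝ × ℝ)} (hF : GenPos F) {k l : ℕ}
    (hcard : (k + l).choose k < F.card) : HasCup (k + 2) F ∨ HasCap (l + 2) F := by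
  obtain ⟨hinj, horient⟩ := genPos_iff.1 hF
  rw [hasCup_iff, hasCap_iff]
  exact hasTurnChain_or_hasTurnChain_of_choose_lt_card hinj
    (fun p hp q hq r hr hpq hqr => (horient p hp q hq r hr hpq hqr).lt_or_gt) k l F subset_rfl hcard

theorem exists_genPos_card_eq_choose_not_hasCup_not_hasCap : ∀ k l : ℕ, ∃ F : Finset (ℝ × ℝ),
    GenPos F ∧ F.card = (k + l).choose k ∧ ¬ HasCup (k + 2) F ∧ ¬ HasCap (l + 2) F
  | 0, _ | _ + 1, 0 => ⟨{0}, genPos_iff.2 ⟨by simp, by simp⟩, by simp,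
      fun h => absurd (hasCup_iff.1 h).card_le (by simp),
      fun h => absurd (hasCap_iff.1 h).card_le (by simp)⟩
  | k + 1, l + 1 => by
    obtain ⟨X, hX, hXcard, hXcup, hXcap⟩ :=
      exists_genPos_card_eq_choose_not_hasCup_not_hasCap (k + 1) l
    obtain ⟨Y, hY, hYcard, hYcup, hYcap⟩ :=
      exists_genPos_card_eq_choose_not_hasCup_not_hasCap k (l + 1)
    obtain ⟨v, hv⟩ := exists_isLowerLeftOf_image_add X Y
    refine ⟨X ∪ Y.image (· + v), hv.genPos_union hX (hY.image_add v), ?_,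
      hv.not_hasCup_union hXcup fun h => hYcup h.of_image_add,
      hv.not_hasCap_union hXcap fun h => hYcap h.of_image_add⟩
    rw [Finset.card_union_of_disjoint hv.disjoint,
      Finset.card_image_of_injective _ (add_left_injective v), hXcard, hYcard,
      show k + 1 + (l + 1) = k + l + 1 + 1 by ring, Nat.choose_succ_succ', add_comm,
      show k + 1 + l = k + l + 1 by ring, show k + (l + 1) = k + l + 1 by ring]

/-- The cup-cap function for lines: f(k, l) = C(k + l - 4, k - 2) + 1. -/
theorem stmt7 (k l : ℕ) (hk : 2 ≤ k) (hl : 2 ≤ l) :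
    IsLeast {N : ℕ | ∀ F : Finset (ℝ × ℝ), GenPos F → N ≤ F.card →
        HasCup k F ∨ HasCap l F}
      (Nat.choose (k + l - 4) (k - 2) + 1) := by
  obtain ⟨k, rfl⟩ := Nat.exists_eq_add_of_le' hk
  obtain ⟨l, rfl⟩ := Nat.exists_eq_add_of_le' hl
  rw [show k + 2 + (l + 2) - 4 = k + l by omega, Nat.add_sub_cancel]
  refine ⟨fun F hF hcard => hasCup_or_hasCap_of_choose_lt_card hF hcard, fun N hN => ?_⟩
  obtain ⟨F, hF, hcard, hcup, hcap⟩ := exists_genPos_card_eq_choose_not_hasCup_not_hasCap k l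
  by_contra! hNF
  exact (hN F hF (by omega)).elim hcup hcap
end
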